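/- arXiv:2409.01226 — 4 statements merged into one kernel-verified Lean document; each statement's English description precedes it below -/
import Mathlib

section
/- Fix a finite abelian p-group G and a sequence of supports (Σ_n)_{n≥1}, and let X_n be the Haar-random n×n matrix over Z_p supported on Σ_n. Then lim_{n→∞} E_n(G) = 1 if and only if lim_{n→∞} Σ_{(G_1,…,G_n) ≠ (G,…,G)} d_{G_1,…,G_n} = 0, where the sum runs over all n-tuples (G_1,…,G_n) of subgroups of G that are not all equal to G. -/
open MeasureTheory Filter

noncomputable instance padicMeasurableSpace {p : ℕ} [Fact p.Prime] : MeasurableSpace ℤ_[p] := borel ℤ_[p]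

/-- `μ` is the Haar probability measure on `ℤ_p`: a translation-invariant probability measure. -/
def IsHaarProb {p : ℕ} [Fact p.Prime] (μ : Measure ℤ_[p]) : Prop :=
  IsProbabilityMeasure μ ∧ ∀ (x : ℤ_[p]) (s : Set ℤ_[p]), μ ((fun y => x + y) '' s) = μ s

/-- The distribution of a random `n × n` matrix over `ℤ_p` supported on `σ`. -/
noncomputable def matrixLaw {p : ℕ} [Fact p.Prime] (μ : Measure ℤ_[p]) {n : ℕ}
    (σ : Fin n → Finset (Fin n)) : Measure (Fin n → Fin n → ℤ_[p]) :=
  (Measure.pi fun _ : Fin n × Fin n => μ).map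
    fun ω i j => if i ∈ σ j then ω (i, j) else 0

/-- The cokernel `ℤ_p^n / M ℤ_p^n` of the matrix with entries `g`. -/
abbrev cok {p : ℕ} [Fact p.Prime] {n : ℕ} (g : Fin n → Fin n → ℤ_[p]) : Type :=
  (Fin n → ℤ_[p]) ⧸ LinearMap.range (Matrix.of g).mulVecLin

/-- The number of surjective homomorphisms from `cok g` onto `G`. -/
noncomputable def nSur {p : ℕ} [Fact p.Prime] {n : ℕ} (g : Fin n → Fin n → ℤ_[p])
    (G : Type) [AddCommGroup G] : ℕ :=
  Nat.card {f : cok g →+ G // Function.Surjective f}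

/-- `E_n(G)`: the expected number of surjections from the cokernel of the Haar-random
matrix supported on `σ` onto `G`. -/
noncomputable def En {p : ℕ} [Fact p.Prime] (μ : Measure ℤ_[p]) {n : ℕ}
    (σ : Fin n → Finset (Fin n)) (G : Type) [AddCommGroup G] : ℝ :=
  ∫ g, (nSur g G : ℝ) ∂(matrixLaw μ σ)

/-- `V_σ`: the subgroup of `ℤ_p^n` generated by the standard basis vectors `e_i`, `i ∈ σ`,
i.e. the vectors vanishing outside `σ`. -/
noncomputable def Vsub {p : ℕ} [Fact p.Prime] {n : ℕ} (σ : Finset (Fin n)) :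
    AddSubgroup (Fin n → ℤ_[p]) :=
  AddSubgroup.pi {i | i ∉ σ} fun _ => ⊥

/-- `d_{G_1,…,G_n} = |S_{G_1,…,G_n}| / (|G_1|⋯|G_n|)`, where
`S_{G_1,…,G_n} = {F ∈ Sur(ℤ_p^n, G) : F(V_{σ i}) = G i for all i}`. -/
noncomputable def dcoef {p : ℕ} [Fact p.Prime] {n : ℕ} (σ : Fin n → Finset (Fin n))
    {G : Type} [AddCommGroup G] (Gs : Fin n → AddSubgroup G) : ℝ :=
  (Nat.card {F : (Fin n → ℤ_[p]) →+ G //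
      Function.Surjective F ∧ ∀ i, AddSubgroup.map F (Vsub (σ i)) = Gs i} : ℝ) /
    ∏ i, (Nat.card (Gs i) : ℝ)


open scoped ENNReal in
lemma _dummy : (1:ℝ≥0∞) = 1 := rfl

open scoped ENNReal NNReal

instance padicBorelSpace {p : ℕ} [Fact p.Prime] : BorelSpace ℤ_[p] := ⟨rfl⟩

namespace Prop31

variable {p : ℕ} [Fact p.Prime] {m n : ℕ} {G : Type} [AddCommGroup G]

instance instNeZeroPm : NeZero (p ^ m) :=
  ⟨pow_ne_zero m (Nat.Prime.ne_zero (Fact.out : p.Prime))⟩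

/-- A lift of `ZMod (p^m)` back to `ℤ_[p]`. -/
noncomputable def lift1 (p m : ℕ) [Fact p.Prime] (c : ZMod (p ^ m)) : ℤ_[p] := (c.val : ℤ_[p])

lemma q1_lift1 (c : ZMod (p ^ m)) : PadicInt.toZModPow m (lift1 p m c) = c := by
  rw [lift1, map_natCast]
  exact ZMod.natCast_rightInverse c

lemma lift1_zero : lift1 p m (0 : ZMod (p ^ m)) = 0 := by
  simp [lift1, ZMod.val_zero]

/-- Values of an additive hom into a `p^m`-torsion group depend only on coordinates
mod `p^m`. -/
lemma hom_congr (htors : ∀ g : G, p ^ m • g = 0) (F : (Fin n → ℤ_[p]) →+ G)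
    {x y : Fin n → ℤ_[p]}
    (h : ∀ i, PadicInt.toZModPow m (x i) = PadicInt.toZModPow m (y i)) : F x = F y := by
  have hd : ∀ i, ((p : ℤ_[p]) ^ m) ∣ (x i - y i) := by
    intro i
    have hk : x i - y i ∈ RingHom.ker (PadicInt.toZModPow (p := p) m) := by
      simp [RingHom.mem_ker, map_sub, h i]
    rwa [PadicInt.ker_toZModPow, Ideal.mem_span_singleton] at hk
  choose c hc using hd
  have hxy : x = y + (p ^ m : ℕ) • c := by
    funext i
    show x i = y i + (p ^ m : ℕ) • c i
    rw [nsmul_eq_mul]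
    push_cast
    linear_combination hc i
  rw [hxy, map_add, map_nsmul, htors, add_zero]

lemma hom_nsmul_val (htors : ∀ g : G, p ^ m • g = 0) (F : (Fin n → ℤ_[p]) →+ G)
    (c : ℤ_[p]) (v : Fin n → ℤ_[p]) :
    F (c • v) = (PadicInt.toZModPow m c).val • F v := by
  rw [← map_nsmul]
  apply hom_congr htors
  intro i
  have hcast : (((PadicInt.toZModPow m c).val : ℕ) : ZMod (p ^ m)) = PadicInt.toZModPow m c :=
    ZMod.natCast_rightInverse _
  have h1 : ((PadicInt.toZModPow m c).val • v) i
      = ((((PadicInt.toZModPow m c).val : ℕ) : ℤ_[p])) * v i := by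
    simp [nsmul_eq_mul]
  have h2 : (c • v) i = c * v i := rfl
  rw [h1, h2, map_mul, map_mul, map_natCast, hcast]

/-- The finite model of an additive hom `ℤ_p^n →+ G`. -/
noncomputable def Fbar (htors : ∀ g : G, p ^ m • g = 0) (F : (Fin n → ℤ_[p]) →+ G) :
    (Fin n → ZMod (p ^ m)) →+ G :=
  AddMonoidHom.mk' (fun v => F fun i => lift1 p m (v i)) (by
    intro a b
    rw [← map_add]
    apply hom_congr htors
    intro i
    simp [q1_lift1, map_add])

lemma Fbar_eq (htors : ∀ g : G, p ^ m • g = 0) (F : (Fin n → ℤ_[p]) →+ G)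
    (x : Fin n → ℤ_[p]) :
    F x = Fbar htors F (fun i => PadicInt.toZModPow m (x i)) := by
  apply hom_congr htors
  intro i
  simp [Fbar, q1_lift1]

/-- Reduction mod `p^m`, coordinatewise, as an additive hom. -/
noncomputable def qhat (p : ℕ) [Fact p.Prime] (m n : ℕ) :
    (Fin n → ℤ_[p]) →+ (Fin n → ZMod (p ^ m)) :=
  AddMonoidHom.mk' (fun x i => PadicInt.toZModPow m (x i)) (by
    intro a b; funext i; simp [map_add])

/-- Homs from `ℤ_p^n` correspond to homs from `(ZMod p^m)^n`. -/
noncomputable def homEquivFinite (htors : ∀ g : G, p ^ m • g = 0) :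
    ((Fin n → ℤ_[p]) →+ G) ≃ ((Fin n → ZMod (p ^ m)) →+ G) where
  toFun := Fbar htors
  invFun Φ := Φ.comp (qhat p m n)
  left_inv F := AddMonoidHom.ext fun x => by
    show Fbar htors F (fun i => PadicInt.toZModPow m (x i)) = F x
    exact (Fbar_eq htors F x).symm
  right_inv Φ := AddMonoidHom.ext fun v => by
    show Φ (fun i => PadicInt.toZModPow m (lift1 p m (v i))) = Φ v
    congr 1
    funext i
    exact q1_lift1 (v i)

instance finiteHom {G : Type} [AddCommGroup G] [Finite G] {X : Type} [Finite X] [AddZeroClass X] :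
    Finite (X →+ G) :=
  Finite.of_injective (fun F => (F : X → G)) DFunLike.coe_injective

lemma finite_hom_padic (htors : ∀ g : G, p ^ m • g = 0) [Finite G] :
    Finite ((Fin n → ℤ_[p]) →+ G) :=
  Finite.of_equiv _ (homEquivFinite htors).symm

/-- Homs from `(ZMod N)^n` split as tuples of homs from `ZMod N`. -/
noncomputable def homPiEquiv (N : ℕ) (A : Type) [AddCommGroup A] :
    ((Fin n → ZMod N) →+ A) ≃ (Fin n → (ZMod N →+ A)) where
  toFun Φ i := Φ.comp (AddMonoidHom.single (fun _ : Fin n => ZMod N) i)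
  invFun fs := AddMonoidHom.mk' (fun x => ∑ i, fs i (x i)) (by
    intro a b
    simp [map_add, Finset.sum_add_distrib])
  left_inv Φ := AddMonoidHom.ext fun x => by
    show ∑ i, Φ (Pi.single i (x i)) = Φ x
    rw [← map_sum, Finset.univ_sum_single]
  right_inv fs := by
    funext i
    refine AddMonoidHom.ext fun z => ?_
    show ∑ j, fs j ((Pi.single i z : Fin n → ZMod N) j) = fs i z
    rw [Finset.sum_eq_single i]
    · rw [Pi.single_eq_same]
    · intro j _ hj
      rw [Pi.single_eq_of_ne hj, map_zero]
    · intro h; exact absurd (Finset.mem_univ i) h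

lemma nsmul_mod {A : Type} [AddCommGroup A] {N : ℕ} (htors : ∀ a : A, N • a = 0)
    (k : ℕ) (a : A) : (k % N) • a = k • a := by
  conv_rhs => rw [← Nat.div_add_mod k N]
  rw [add_nsmul, mul_nsmul, htors, smul_zero, zero_add]

lemma nsmul_congr_mod {A : Type} [AddCommGroup A] {N : ℕ} [NeZero N]
    (htors : ∀ a : A, N • a = 0)
    {k k' : ℕ} (h : (k : ZMod N) = (k' : ZMod N)) (a : A) : k • a = k' • a := by
  rw [← nsmul_mod htors k a, ← nsmul_mod htors k' a]
  have : k % N = k' % N := by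
    rwa [ZMod.natCast_eq_natCast_iff, Nat.ModEq] at h
  rw [this]

/-- Homs from `ZMod N` into an `N`-torsion group correspond to elements. -/
noncomputable def homZModEquiv (N : ℕ) [NeZero N] (A : Type) [AddCommGroup A]
    (htors : ∀ a : A, N • a = 0) : (ZMod N →+ A) ≃ A where
  toFun f := f 1
  invFun a := AddMonoidHom.mk' (fun z => z.val • a) (by
    intro x y
    show (x + y).val • a = x.val • a + y.val • a
    rw [ZMod.val_add, nsmul_mod htors, add_nsmul])
  left_inv f := AddMonoidHom.ext fun z => by
    show z.val • f 1 = f z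
    rw [← map_nsmul]
    congr 1
    have : ((z.val : ℕ) : ZMod N) = z := ZMod.natCast_rightInverse z
    rw [nsmul_eq_mul, mul_one, this]
  right_inv a := by
    show (1 : ZMod N).val • a = a
    have h1 : (((1 : ZMod N).val : ℕ) : ZMod N) = ((1 : ℕ) : ZMod N) := by
      rw [Nat.cast_one]
      exact ZMod.natCast_rightInverse 1
    rw [nsmul_congr_mod htors h1, one_nsmul]

/-- Counting: `|Hom(ℤ_p^n, A)| = |A|^n` for `p^m`-torsion `A`. -/
lemma card_hom (A : Type) [AddCommGroup A] [Finite A]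
    (htors : ∀ a : A, p ^ m • a = 0) :
    Nat.card ((Fin n → ℤ_[p]) →+ A) = (Nat.card A) ^ n := by
  rw [Nat.card_congr (homEquivFinite htors), Nat.card_congr (homPiEquiv (p ^ m) A),
    Nat.card_pi]
  have : ∀ i : Fin n, Nat.card (ZMod (p ^ m) →+ A) = Nat.card A := fun _ =>
    Nat.card_congr (homZModEquiv (p ^ m) A htors)
  rw [Finset.prod_congr rfl (fun i _ => this i), Finset.prod_const, Finset.card_univ,
    Fintype.card_fin]

section Measures

/-- The fiber of reduction mod `p^m` over `c`. -/
def fib (p m : ℕ) [Fact p.Prime] (c : ZMod (p ^ m)) : Set ℤ_[p] :=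
  {x | PadicInt.toZModPow m x = c}

lemma fib_eq_preimage (c : ZMod (p ^ m)) :
    fib p m c = (fun x : ℤ_[p] => x - lift1 p m c) ⁻¹'
      (Metric.closedBall 0 ((p : ℝ) ^ (-(m : ℤ)))) := by
  ext x
  simp only [fib, Set.mem_setOf_eq, Set.mem_preimage, Metric.mem_closedBall, dist_zero_right]
  rw [PadicInt.norm_le_pow_iff_mem_span_pow, ← PadicInt.ker_toZModPow, RingHom.mem_ker,
    map_sub, q1_lift1, sub_eq_zero]

lemma measurableSet_fib (c : ZMod (p ^ m)) : MeasurableSet (fib p m c) := by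
  rw [fib_eq_preimage]
  exact (continuous_id.sub continuous_const).measurable measurableSet_closedBall

lemma fib_translate (c : ZMod (p ^ m)) :
    fib p m c = (fun y => lift1 p m c + y) '' fib p m 0 := by
  ext x
  simp only [fib, Set.mem_image, Set.mem_setOf_eq]
  constructor
  · intro hx
    exact ⟨x - lift1 p m c, by rw [map_sub, q1_lift1, hx, sub_self], by ring⟩
  · rintro ⟨y, hy, rfl⟩
    rw [map_add, q1_lift1, hy, add_zero]

variable (μ : Measure ℤ_[p])

lemma measure_fib (hμ : IsHaarProb μ) (c : ZMod (p ^ m)) :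
    μ (fib p m c) = ((p ^ m : ℕ) : ℝ≥0∞)⁻¹ := by
  haveI := hμ.1
  have heq : ∀ c : ZMod (p ^ m), μ (fib p m c) = μ (fib p m 0) := fun c => by
    rw [fib_translate]; exact hμ.2 _ _
  have hunion : (Set.univ : Set ℤ_[p]) = ⋃ c : ZMod (p ^ m), fib p m c := by
    ext x
    simp only [Set.mem_univ, Set.mem_iUnion, true_iff]
    exact ⟨_, rfl⟩
  have hdisj : Pairwise (Function.onFun Disjoint fun c => fib p m c) := by
    intro c c' hcc
    exact Set.disjoint_left.2 fun x hx hx' => hcc (hx.symm.trans hx')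
  have h1 : (1 : ℝ≥0∞) = ∑ c : ZMod (p ^ m), μ (fib p m c) := by
    rw [← tsum_fintype (L := SummationFilter.unconditional _), ← measure_iUnion hdisj fun c => measurableSet_fib c, ← hunion,
      measure_univ]
  have h2 : (1 : ℝ≥0∞) = ((p ^ m : ℕ) : ℝ≥0∞) * μ (fib p m 0) := by
    rw [h1, Finset.sum_congr rfl fun c _ => heq c, Finset.sum_const, Finset.card_univ,
      ZMod.card, nsmul_eq_mul]
  have hN0 : ((p ^ m : ℕ) : ℝ≥0∞) ≠ 0 := by
    have : (p ^ m : ℕ) ≠ 0 := (NeZero.ne _)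
    exact_mod_cast this
  have hNt : ((p ^ m : ℕ) : ℝ≥0∞) ≠ ⊤ := ENNReal.natCast_ne_top _
  rw [heq c]
  calc μ (fib p m 0) = (((p ^ m : ℕ) : ℝ≥0∞)⁻¹ * ((p ^ m : ℕ) : ℝ≥0∞)) * μ (fib p m 0) := by
        rw [ENNReal.inv_mul_cancel hN0 hNt, one_mul]
    _ = ((p ^ m : ℕ) : ℝ≥0∞)⁻¹ := by rw [mul_assoc, ← h2, mul_one]

end Measures

section ZeroSet

variable [Finite G]

lemma zeroSet_decomp (htors : ∀ g : G, p ^ m • g = 0) (F : (Fin n → ℤ_[p]) →+ G) :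
    {x : Fin n → ℤ_[p] | F x = 0} =
      ⋃ v : {v : Fin n → ZMod (p ^ m) // F (fun i => lift1 p m (v i)) = 0},
        Set.univ.pi fun i => fib p m (v.1 i) := by
  ext x
  simp only [Set.mem_setOf_eq, Set.mem_iUnion, Set.mem_pi, Set.mem_univ, forall_const]
  constructor
  · intro hx
    refine ⟨⟨fun i => PadicInt.toZModPow m (x i), ?_⟩, fun i => rfl⟩
    rw [← hx]
    exact hom_congr htors F fun i => (q1_lift1 _)
  · rintro ⟨⟨v, hv⟩, hxv⟩
    have : F x = F fun i => lift1 p m (v i) := by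
      apply hom_congr htors
      intro i
      rw [hxv i, q1_lift1]
    rw [this, hv]

lemma measurableSet_zeroSet (htors : ∀ g : G, p ^ m • g = 0) (F : (Fin n → ℤ_[p]) →+ G) :
    MeasurableSet {x : Fin n → ℤ_[p] | F x = 0} := by
  rw [zeroSet_decomp htors F]
  exact MeasurableSet.iUnion fun v => MeasurableSet.univ_pi fun i => measurableSet_fib _

end ZeroSet

section Event

variable [Finite G]

/-- The finite model of `u ↦ F (truncation of lift of u to s)`. -/
noncomputable def kcol (htors : ∀ g : G, p ^ m • g = 0) (F : (Fin n → ℤ_[p]) →+ G)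
    (s : Finset (Fin n)) : (Fin n → ZMod (p ^ m)) →+ G :=
  AddMonoidHom.mk' (fun u => F fun i => if i ∈ s then lift1 p m (u i) else 0) (by
    intro a b
    rw [← map_add]
    apply hom_congr htors
    intro i
    by_cases h : i ∈ s <;> simp [h, q1_lift1, map_add])

lemma kcol_spec (htors : ∀ g : G, p ^ m • g = 0) (F : (Fin n → ℤ_[p]) →+ G)
    (s : Finset (Fin n)) (x : Fin n → ℤ_[p]) :
    F (fun i => if i ∈ s then x i else 0)
      = kcol htors F s (fun i => PadicInt.toZModPow m (x i)) := by
  show _ = F fun i => if i ∈ s then lift1 p m (PadicInt.toZModPow m (x i)) else 0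
  apply hom_congr htors
  intro i
  by_cases h : i ∈ s <;> simp [h, q1_lift1]

lemma range_kcol (htors : ∀ g : G, p ^ m • g = 0) (F : (Fin n → ℤ_[p]) →+ G)
    (s : Finset (Fin n)) :
    (kcol htors F s).range = AddSubgroup.map F (Vsub s) := by
  ext g
  simp only [AddMonoidHom.mem_range, AddSubgroup.mem_map]
  constructor
  · rintro ⟨u, rfl⟩
    refine ⟨fun i => if i ∈ s then lift1 p m (u i) else 0, ?_, rfl⟩
    rw [Vsub, AddSubgroup.mem_pi]
    intro i hi
    simp only [Set.mem_setOf_eq] at hi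
    simp [if_neg hi]
  · rintro ⟨x, hx, rfl⟩
    refine ⟨fun i => PadicInt.toZModPow m (x i), ?_⟩
    rw [← kcol_spec htors F s x]
    apply hom_congr htors
    intro i
    by_cases h : i ∈ s
    · simp [h]
    · have hx0 : x i = 0 := by
        rw [Vsub, AddSubgroup.mem_pi] at hx
        simpa using hx i h
      simp [h, hx0]

lemma card_ker_mul (h : (Fin n → ZMod (p ^ m)) →+ G) :
    Nat.card {u : Fin n → ZMod (p ^ m) // h u = 0} * Nat.card h.range = (p ^ m) ^ n := by
  have e : {u : Fin n → ZMod (p ^ m) // h u = 0} ≃ h.ker :=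
    Equiv.subtypeEquivRight fun u => (AddMonoidHom.mem_ker).symm
  rw [Nat.card_congr e]
  have h1 := AddSubgroup.card_eq_card_quotient_mul_card_addSubgroup h.ker
  have hq : Nat.card ((Fin n → ZMod (p ^ m)) ⧸ h.ker) = Nat.card h.range :=
    Nat.card_congr (QuotientAddGroup.quotientKerEquivRange h).toEquiv
  have hdom : Nat.card (Fin n → ZMod (p ^ m)) = (p ^ m) ^ n := by
    rw [Nat.card_pi]
    simp [Nat.card_eq_fintype_card, ZMod.card]
  rw [mul_comm, ← hq, ← h1, hdom]

/-- Column-splitting equivalence. -/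
def colSplit (P : (j : Fin n) → (Fin n → ZMod (p ^ m)) → Prop) :
    {w : Fin n × Fin n → ZMod (p ^ m) // ∀ j, P j (fun i => w (i, j))} ≃
      ∀ j, {u : Fin n → ZMod (p ^ m) // P j u} where
  toFun w j := ⟨fun i => w.1 (i, j), w.2 j⟩
  invFun v := ⟨fun q => (v q.2).1 q.1, fun j => (v j).2⟩
  left_inv w := by
    apply Subtype.ext
    funext q
    rfl
  right_inv v := by
    funext j
    apply Subtype.ext
    rfl

lemma measure_event (hμ : IsHaarProb μ) (htors : ∀ g : G, p ^ m • g = 0)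
    (σ : Fin n → Finset (Fin n)) (F : (Fin n → ℤ_[p]) →+ G) :
    (Measure.pi fun _ : Fin n × Fin n => μ)
        {ω : Fin n × Fin n → ℤ_[p] | ∀ j, F (fun i => if i ∈ σ j then ω (i, j) else 0) = 0}
      = ∏ j, ((Nat.card (AddSubgroup.map F (Vsub (σ j))) : ℝ≥0∞))⁻¹ := by
  classical
  haveI := hμ.1
  set P : (j : Fin n) → (Fin n → ZMod (p ^ m)) → Prop :=
    fun j u => kcol htors F (σ j) u = 0 with hP
  haveI : ∀ j, DecidablePred (P j) := fun j u => Classical.dec _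
  set W := {w : Fin n × Fin n → ZMod (p ^ m) // ∀ j, P j (fun i => w (i, j))} with hW
  haveI : Fintype W := Fintype.ofFinite W
  have hdecomp :
      {ω : Fin n × Fin n → ℤ_[p] | ∀ j, F (fun i => if i ∈ σ j then ω (i, j) else 0) = 0}
        = ⋃ w : W, Set.univ.pi fun q => fib p m (w.1 q) := by
    ext ω
    simp only [Set.mem_setOf_eq, Set.mem_iUnion, Set.mem_pi, Set.mem_univ, forall_const]
    constructor
    · intro hω
      refine ⟨⟨fun q => PadicInt.toZModPow m (ω q), fun j => ?_⟩, fun q => rfl⟩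
      show kcol htors F (σ j) (fun i => PadicInt.toZModPow m (ω (i, j))) = 0
      rw [← kcol_spec htors F (σ j) (fun i => ω (i, j))]
      exact hω j
    · rintro ⟨⟨w, hw⟩, hωw⟩ j
      have hcol : (fun i => PadicInt.toZModPow m (ω (i, j))) = fun i => w (i, j) :=
        funext fun i => hωw (i, j)
      rw [kcol_spec htors F (σ j) (fun i => ω (i, j)), hcol]
      exact hw j
  have hdisj : Pairwise (Function.onFun Disjoint
      fun w : W => Set.univ.pi fun q => fib p m (w.1 q)) := by
    intro w w' hww
    refine Set.disjoint_left.2 fun ω hω hω' => hww ?_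
    apply Subtype.ext
    funext q
    have h1 : PadicInt.toZModPow m (ω q) = w.1 q := hω q (Set.mem_univ q)
    have h2 : PadicInt.toZModPow m (ω q) = w'.1 q := hω' q (Set.mem_univ q)
    rw [← h1, h2]
  have hpimeas : ∀ w : W, MeasurableSet (Set.univ.pi fun q => fib p m (w.1 q)) :=
    fun w => MeasurableSet.univ_pi fun q => measurableSet_fib _
  rw [hdecomp, measure_iUnion hdisj hpimeas, tsum_fintype]
  have hCw : ∀ w : W, (Measure.pi fun _ : Fin n × Fin n => μ)
      (Set.univ.pi fun q => fib p m (w.1 q))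
        = (((p ^ m : ℕ) : ℝ≥0∞))⁻¹ ^ (n * n) := by
    intro w
    rw [Measure.pi_pi]
    have : ∀ q : Fin n × Fin n, μ (fib p m (w.1 q)) = (((p ^ m : ℕ) : ℝ≥0∞))⁻¹ :=
      fun q => measure_fib μ hμ _
    rw [Finset.prod_congr rfl fun q _ => this q, Finset.prod_const, Finset.card_univ,
      Fintype.card_prod, Fintype.card_fin]
  rw [Finset.sum_congr rfl fun w _ => hCw w, Finset.sum_const, Finset.card_univ, nsmul_eq_mul]
  -- counting |W|
  have hcardW : (Fintype.card W : ℝ≥0∞)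
      = ∏ j, (Nat.card {u : Fin n → ZMod (p ^ m) // P j u} : ℝ≥0∞) := by
    have h1 : Nat.card W = ∏ j, Nat.card {u : Fin n → ZMod (p ^ m) // P j u} := by
      rw [Nat.card_congr (colSplit P), Nat.card_pi]
    rw [← Nat.card_eq_fintype_card, h1]
    push_cast
    rfl
  have hK : ∀ j, (Nat.card {u : Fin n → ZMod (p ^ m) // P j u} : ℝ≥0∞)
      = (((p ^ m : ℕ) : ℝ≥0∞)) ^ n
        * ((Nat.card (AddSubgroup.map F (Vsub (σ j))) : ℝ≥0∞))⁻¹ := by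
    intro j
    have hker := card_ker_mul (kcol htors F (σ j))
    rw [range_kcol htors F (σ j)] at hker
    have hcast : (Nat.card {u : Fin n → ZMod (p ^ m) // P j u} : ℝ≥0∞)
        * (Nat.card (AddSubgroup.map F (Vsub (σ j))) : ℝ≥0∞)
          = (((p ^ m : ℕ) : ℝ≥0∞)) ^ n := by
      rw [← Nat.cast_mul, hker]
      push_cast
      rfl
    haveI : Nonempty (AddSubgroup.map F (Vsub (σ j))) := ⟨0, zero_mem _⟩
    have hH0 : ((Nat.card (AddSubgroup.map F (Vsub (σ j))) : ℝ≥0∞)) ≠ 0 := by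
      have := Nat.card_pos (α := AddSubgroup.map F (Vsub (σ j)))
      exact_mod_cast this.ne'
    have hHt : ((Nat.card (AddSubgroup.map F (Vsub (σ j))) : ℝ≥0∞)) ≠ ⊤ :=
      ENNReal.natCast_ne_top _
    calc (Nat.card {u : Fin n → ZMod (p ^ m) // P j u} : ℝ≥0∞)
        = (Nat.card {u : Fin n → ZMod (p ^ m) // P j u} : ℝ≥0∞)
          * ((Nat.card (AddSubgroup.map F (Vsub (σ j))) : ℝ≥0∞)
            * ((Nat.card (AddSubgroup.map F (Vsub (σ j))) : ℝ≥0∞))⁻¹) := by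
          rw [ENNReal.mul_inv_cancel hH0 hHt, mul_one]
      _ = ((Nat.card {u : Fin n → ZMod (p ^ m) // P j u} : ℝ≥0∞)
            * (Nat.card (AddSubgroup.map F (Vsub (σ j))) : ℝ≥0∞))
          * ((Nat.card (AddSubgroup.map F (Vsub (σ j))) : ℝ≥0∞))⁻¹ := by
          rw [mul_assoc]
      _ = _ := by rw [hcast]
  have hN0 : ((p ^ m : ℕ) : ℝ≥0∞) ≠ 0 := by
    have : (p ^ m : ℕ) ≠ 0 := NeZero.ne _
    exact_mod_cast this
  have hNt : ((p ^ m : ℕ) : ℝ≥0∞) ≠ ⊤ := ENNReal.natCast_ne_top _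
  rw [hcardW, Finset.prod_congr rfl fun j _ => hK j, Finset.prod_mul_distrib,
    Finset.prod_const, Finset.card_univ, Fintype.card_fin, ← pow_mul, ← ENNReal.inv_pow]
  rw [mul_comm ((((p ^ m : ℕ) : ℝ≥0∞)) ^ (n * n)) _, mul_assoc,
    ENNReal.mul_inv_cancel (pow_ne_zero _ hN0) (ENNReal.pow_ne_top hNt), mul_one]

end Event

section Cok

variable [Finite G]

lemma col_mem_range (g : Fin n → Fin n → ℤ_[p]) (j : Fin n) :
    (fun i => g i j) ∈ LinearMap.range (Matrix.of g).mulVecLin := by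
  refine ⟨Pi.single j 1, ?_⟩
  rw [Matrix.mulVecLin_apply, Matrix.mulVec_single]
  funext i
  simp

lemma vanish_on_range (htors : ∀ g : G, p ^ m • g = 0) (g : Fin n → Fin n → ℤ_[p])
    (F : (Fin n → ℤ_[p]) →+ G) (hcols : ∀ j, F (fun i => g i j) = 0) :
    ∀ x ∈ LinearMap.range (Matrix.of g).mulVecLin, F x = 0 := by
  rintro x ⟨c, rfl⟩
  have hsum : (Matrix.of g).mulVecLin c = ∑ j, c j • (fun i => g i j) := by
    funext i
    rw [Matrix.mulVecLin_apply]
    simp only [Matrix.mulVec, dotProduct, Finset.sum_apply, Pi.smul_apply,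
      smul_eq_mul]
    exact Finset.sum_congr rfl fun j _ => mul_comm _ _
  rw [hsum, map_sum]
  refine Finset.sum_eq_zero fun j _ => ?_
  rw [hom_nsmul_val htors, hcols j, smul_zero]

/-- Surjections from the cokernel correspond to surjections killing the columns. -/
noncomputable def cokEquiv (htors : ∀ g : G, p ^ m • g = 0) (g : Fin n → Fin n → ℤ_[p]) :
    {φ : cok g →+ G // Function.Surjective φ} ≃
      {F : (Fin n → ℤ_[p]) →+ G //
        Function.Surjective F ∧ ∀ j, F (fun i => g i j) = 0} where
  toFun φ := ⟨φ.1.comp ((LinearMap.range (Matrix.of g).mulVecLin).mkQ.toAddMonoidHom),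
    by
      constructor
      · exact φ.2.comp (Submodule.Quotient.mk_surjective _)
      · intro j
        show φ.1 (Submodule.Quotient.mk _) = 0
        rw [(Submodule.Quotient.mk_eq_zero _).2 (col_mem_range g j), map_zero]⟩
  invFun F := ⟨QuotientAddGroup.lift (LinearMap.range (Matrix.of g).mulVecLin).toAddSubgroup
      F.1 (fun x hx => (AddMonoidHom.mem_ker).2
        (vanish_on_range htors g F.1 F.2.2 x hx)),
    by
      intro y
      obtain ⟨x, hx⟩ := F.2.1 y
      exact ⟨Submodule.Quotient.mk x, hx⟩⟩
  left_inv φ := by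
    apply Subtype.ext
    refine AddMonoidHom.ext fun x => ?_
    obtain ⟨y, rfl⟩ := Submodule.Quotient.mk_surjective _ x
    rfl
  right_inv F := by
    apply Subtype.ext
    refine AddMonoidHom.ext fun x => ?_
    rfl

lemma nSur_eq (htors : ∀ g : G, p ^ m • g = 0) (g : Fin n → Fin n → ℤ_[p]) :
    nSur g G = Nat.card {F : (Fin n → ℤ_[p]) →+ G //
      Function.Surjective F ∧ ∀ j, F (fun i => g i j) = 0} :=
  Nat.card_congr (cokEquiv htors g)

end Cok

section Integral

variable [Finite G]

lemma measurable_T (σ : Fin n → Finset (Fin n)) :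
    Measurable (fun ω : Fin n × Fin n → ℤ_[p] => fun i j => if i ∈ σ j then ω (i, j) else 0) := by
  apply measurable_pi_lambda
  intro i
  apply measurable_pi_lambda
  intro j
  by_cases h : i ∈ σ j
  · simpa only [if_pos h] using measurable_pi_apply (i, j)
  · simpa only [if_neg h] using measurable_const (α := ℤ_[p])

lemma measurable_colmap (j : Fin n) :
    Measurable (fun g' : Fin n → Fin n → ℤ_[p] => fun i => g' i j) :=
  measurable_pi_lambda _ fun i => (measurable_pi_apply j).comp (measurable_pi_apply i)

/-- The set of matrices whose columns are killed by `F`. -/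
def Aset (F : (Fin n → ℤ_[p]) →+ G) : Set (Fin n → Fin n → ℤ_[p]) :=
  {g' | ∀ j, F (fun i => g' i j) = 0}

lemma measurableSet_Aset (htors : ∀ g : G, p ^ m • g = 0) (F : (Fin n → ℤ_[p]) →+ G) :
    MeasurableSet (Aset F) := by
  have h : Aset F = ⋂ j, (fun g' : Fin n → Fin n → ℤ_[p] => fun i => g' i j) ⁻¹'
      {x | F x = 0} := by
    ext g'
    simp [Aset]
  rw [h]
  exact MeasurableSet.iInter fun j => (measurable_colmap j) (measurableSet_zeroSet htors F)

lemma nSur_indicator (htors : ∀ g : G, p ^ m • g = 0)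
    [Fintype {F : (Fin n → ℤ_[p]) →+ G // Function.Surjective F}]
    (g : Fin n → Fin n → ℤ_[p]) :
    (nSur g G : ℝ) = ∑ F : {F : (Fin n → ℤ_[p]) →+ G // Function.Surjective F},
      (Aset F.1).indicator (1 : (Fin n → Fin n → ℤ_[p]) → ℝ) g := by
  classical
  rw [nSur_eq htors g]
  have e : {F : (Fin n → ℤ_[p]) →+ G //
        Function.Surjective F ∧ ∀ j, F (fun i => g i j) = 0}
      ≃ {F : {F : (Fin n → ℤ_[p]) →+ G // Function.Surjective F} //
          ∀ j, F.1 (fun i => g i j) = 0} :=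
    (Equiv.subtypeSubtypeEquivSubtypeInter _ _).symm
  rw [Nat.card_congr e, Nat.card_eq_fintype_card, Fintype.card_subtype, Finset.card_filter]
  push_cast
  refine Finset.sum_congr rfl fun F _ => ?_
  by_cases h : ∀ j, F.1 (fun i => g i j) = 0 <;>
    simp [h, Aset, Set.indicator_apply]

variable (μ : Measure ℤ_[p])

lemma En_eq_sum_prod (hμ : IsHaarProb μ) (htors : ∀ g : G, p ^ m • g = 0)
    [Fintype {F : (Fin n → ℤ_[p]) →+ G // Function.Surjective F}]
    (σ : Fin n → Finset (Fin n)) :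
    En μ σ G = ∑ F : {F : (Fin n → ℤ_[p]) →+ G // Function.Surjective F},
      ∏ j, ((Nat.card (AddSubgroup.map F.1 (Vsub (σ j))) : ℝ))⁻¹ := by
  classical
  haveI := hμ.1
  have hT := measurable_T (p := p) σ
  have hf : (fun g : Fin n → Fin n → ℤ_[p] => (nSur g G : ℝ))
      = fun g => ∑ F : {F : (Fin n → ℤ_[p]) →+ G // Function.Surjective F},
        (Aset F.1).indicator (1 : (Fin n → Fin n → ℤ_[p]) → ℝ) g :=
    funext fun g => nSur_indicator htors g
  have hmeas : Measurable (fun g : Fin n → Fin n → ℤ_[p] =>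
      ∑ F : {F : (Fin n → ℤ_[p]) →+ G // Function.Surjective F},
        (Aset F.1).indicator (1 : (Fin n → Fin n → ℤ_[p]) → ℝ) g) :=
    Finset.measurable_sum _ fun F _ =>
      measurable_const.indicator (measurableSet_Aset htors F.1)
  rw [En, matrixLaw, hf, integral_map hT.aemeasurable hmeas.aestronglyMeasurable]
  have hcomp : ∀ F : {F : (Fin n → ℤ_[p]) →+ G // Function.Surjective F},
      (fun ω : Fin n × Fin n → ℤ_[p] =>
        (Aset F.1).indicator (1 : (Fin n → Fin n → ℤ_[p]) → ℝ)
          (fun i j => if i ∈ σ j then ω (i, j) else 0))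
      = fun ω => ((fun ω : Fin n × Fin n → ℤ_[p] =>
          fun i j => if i ∈ σ j then ω (i, j) else 0) ⁻¹' (Aset F.1)).indicator
            (1 : (Fin n × Fin n → ℤ_[p]) → ℝ) ω := by
    intro F
    funext ω
    simp only [Set.indicator_apply, Set.mem_preimage, Pi.one_apply]
  have hint : ∀ F ∈ (Finset.univ : Finset {F : (Fin n → ℤ_[p]) →+ G // Function.Surjective F}),
      Integrable (fun ω : Fin n × Fin n → ℤ_[p] =>
        (Aset F.1).indicator (1 : (Fin n → Fin n → ℤ_[p]) → ℝ)
          (fun i j => if i ∈ σ j then ω (i, j) else 0))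
        (Measure.pi fun _ : Fin n × Fin n => μ) := by
    intro F _
    rw [hcomp F]
    exact (integrable_const 1).indicator (hT (measurableSet_Aset htors F.1))
  rw [integral_finset_sum Finset.univ hint]
  refine Finset.sum_congr rfl fun F _ => ?_
  rw [hcomp F, integral_indicator_one (hT (measurableSet_Aset htors F.1))]
  have hpre : (fun ω : Fin n × Fin n → ℤ_[p] =>
      fun i j => if i ∈ σ j then ω (i, j) else 0) ⁻¹' (Aset F.1)
      = {ω : Fin n × Fin n → ℤ_[p] |
          ∀ j, F.1 (fun i => if i ∈ σ j then ω (i, j) else 0) = 0} := rfl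
  rw [hpre, measureReal_def, measure_event hμ htors σ F.1, ENNReal.toReal_prod]
  refine Finset.prod_congr rfl fun j _ => ?_
  rw [ENNReal.toReal_inv]
  norm_num

end Integral

section Counting

variable [Finite G]

lemma torsH (htors : ∀ g : G, p ^ m • g = 0) (H : AddSubgroup G) :
    ∀ a : H, p ^ m • a = 0 := by
  intro a
  apply Subtype.ext
  have h : ((p ^ m • a : H) : G) = p ^ m • (a : G) := rfl
  show ((p ^ m • a : H) : G) = (0 : G)
  rw [h, htors]

lemma card_restrict (htors : ∀ g : G, p ^ m • g = 0) (H : AddSubgroup G) :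
    Nat.card {F : (Fin n → ℤ_[p]) →+ G // ∀ x, F x ∈ H} = (Nat.card H) ^ n := by
  have e : {F : (Fin n → ℤ_[p]) →+ G // ∀ x, F x ∈ H} ≃ ((Fin n → ℤ_[p]) →+ H) :=
    { toFun := fun F => AddMonoidHom.codRestrict F.1 H F.2
      invFun := fun f => ⟨H.subtype.comp f, fun x => (f x).2⟩
      left_inv := fun F => Subtype.ext (AddMonoidHom.ext fun x => rfl)
      right_inv := fun f => AddMonoidHom.ext fun x => Subtype.ext rfl }
  rw [Nat.card_congr e, card_hom H (torsH htors H)]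

lemma card_subgroup_le_of_ne_top (hG : Nat.card G = p ^ m) (H : AddSubgroup G)
    (hH : H ≠ ⊤) : Nat.card H ≤ p ^ (m - 1) := by
  have hdvd : Nat.card H ∣ p ^ m := by
    rw [← hG]
    exact AddSubgroup.card_addSubgroup_dvd_card H
  obtain ⟨k, hk, hcard⟩ := (Nat.dvd_prime_pow (Fact.out : p.Prime)).1 hdvd
  have hkm : k ≠ m := by
    intro h
    apply hH
    apply AddSubgroup.eq_top_of_card_eq
    rw [hcard, h, ← hG]
  have hk1 : k ≤ m - 1 := Nat.le_pred_of_lt (lt_of_le_of_ne hk hkm)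
  rw [hcard]
  exact Nat.pow_le_pow_right (Nat.Prime.pos (Fact.out : p.Prime)) hk1

lemma card_add_card_compl {α : Type} [Finite α] (P : α → Prop) :
    Nat.card {x // P x} + Nat.card {x // ¬ P x} = Nat.card α := by
  classical
  haveI := Fintype.ofFinite α
  rw [Nat.card_eq_fintype_card (α := {x // P x}), Nat.card_eq_fintype_card (α := {x // ¬ P x}),
    Nat.card_eq_fintype_card (α := α), Fintype.card_subtype, Fintype.card_subtype]
  simpa using Finset.card_filter_add_card_filter_not (s := Finset.univ) P

lemma card_nonsur_le (hG : Nat.card G = p ^ m) (htors : ∀ g : G, p ^ m • g = 0) :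
    Nat.card {F : (Fin n → ℤ_[p]) →+ G // ¬ Function.Surjective F}
      ≤ Nat.card (AddSubgroup G) * (p ^ (m - 1)) ^ n := by
  classical
  haveI := finite_hom_padic (n := n) htors
  set ι : {F : (Fin n → ℤ_[p]) →+ G // ¬ Function.Surjective F} →
      Σ H : {H : AddSubgroup G // H ≠ ⊤}, {F' : (Fin n → ℤ_[p]) →+ G // ∀ x, F' x ∈ H.1} :=
    fun F => ⟨⟨F.1.range, fun h => F.2 (AddMonoidHom.range_eq_top.1 h)⟩,
      ⟨F.1, fun x => ⟨x, rfl⟩⟩⟩ with hι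
  have hinj : Function.Injective ι := by
    intro a b h
    exact Subtype.ext (congrArg (fun s : Σ H : {H : AddSubgroup G // H ≠ ⊤},
      {F' : (Fin n → ℤ_[p]) →+ G // ∀ x, F' x ∈ H.1} => s.2.1) h)
  refine le_trans (Nat.card_le_card_of_injective ι hinj) ?_
  haveI : Fintype {H : AddSubgroup G // H ≠ ⊤} := Fintype.ofFinite _
  haveI : ∀ H : {H : AddSubgroup G // H ≠ ⊤},
      Fintype {F' : (Fin n → ℤ_[p]) →+ G // ∀ x, F' x ∈ H.1} := fun H => Fintype.ofFinite _
  rw [Nat.card_eq_fintype_card, Fintype.card_sigma]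
  have hbound : ∀ H : {H : AddSubgroup G // H ≠ ⊤},
      Fintype.card {F' : (Fin n → ℤ_[p]) →+ G // ∀ x, F' x ∈ H.1} ≤ (p ^ (m - 1)) ^ n := by
    intro H
    rw [← Nat.card_eq_fintype_card, card_restrict htors H.1]
    exact Nat.pow_le_pow_left (card_subgroup_le_of_ne_top hG H.1 H.2) n
  refine le_trans (Finset.sum_le_sum fun H _ => hbound H) ?_
  rw [Finset.sum_const, Finset.card_univ, smul_eq_mul]
  apply Nat.mul_le_mul_right
  rw [← Nat.card_eq_fintype_card]
  exact Finite.card_subtype_le _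

lemma card_fiber (htors : ∀ g : G, p ^ m • g = 0)
    [Fintype {F : (Fin n → ℤ_[p]) →+ G // Function.Surjective F}]
    (σ : Fin n → Finset (Fin n)) (Gs : Fin n → AddSubgroup G)
    [DecidablePred fun F : {F : (Fin n → ℤ_[p]) →+ G // Function.Surjective F} =>
      (fun j => AddSubgroup.map F.1 (Vsub (σ j))) = Gs] :
    ((Finset.univ.filter (fun F : {F : (Fin n → ℤ_[p]) →+ G // Function.Surjective F} =>
        (fun j => AddSubgroup.map F.1 (Vsub (σ j))) = Gs)).card)
      = Nat.card {F : (Fin n → ℤ_[p]) →+ G //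
          Function.Surjective F ∧ ∀ i, AddSubgroup.map F (Vsub (σ i)) = Gs i} := by
  classical
  have e : {F : {F : (Fin n → ℤ_[p]) →+ G // Function.Surjective F} //
        (fun j => AddSubgroup.map F.1 (Vsub (σ j))) = Gs}
      ≃ {F : (Fin n → ℤ_[p]) →+ G //
          Function.Surjective F ∧ ∀ i, AddSubgroup.map F (Vsub (σ i)) = Gs i} :=
    (Equiv.subtypeEquivRight fun F => funext_iff).trans
      (Equiv.subtypeSubtypeEquivSubtypeInter
        (fun F : (Fin n → ℤ_[p]) →+ G => Function.Surjective F)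
        (fun F => ∀ i, AddSubgroup.map F (Vsub (σ i)) = Gs i))
  rw [← Nat.card_congr e, Nat.card_eq_fintype_card, Fintype.card_subtype]

lemma En_eq_sum_dcoef (μ : Measure ℤ_[p]) (hμ : IsHaarProb μ)
    (htors : ∀ g : G, p ^ m • g = 0)
    [Fintype {F : (Fin n → ℤ_[p]) →+ G // Function.Surjective F}]
    [Fintype (Fin n → AddSubgroup G)]
    (σ : Fin n → Finset (Fin n)) :
    En μ σ G = ∑ Gs : Fin n → AddSubgroup G, dcoef (p := p) σ Gs := by
  classical
  rw [En_eq_sum_prod μ hμ htors σ]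
  rw [← Finset.sum_fiberwise Finset.univ
    (fun F : {F : (Fin n → ℤ_[p]) →+ G // Function.Surjective F} =>
      fun j => AddSubgroup.map F.1 (Vsub (σ j)))
    (fun F => ∏ j, ((Nat.card (AddSubgroup.map F.1 (Vsub (σ j))) : ℝ))⁻¹)]
  refine Finset.sum_congr rfl fun Gs _ => ?_
  have hconst : ∀ F ∈ Finset.univ.filter
      (fun F : {F : (Fin n → ℤ_[p]) →+ G // Function.Surjective F} =>
        (fun j => AddSubgroup.map F.1 (Vsub (σ j))) = Gs),
      ∏ j, ((Nat.card (AddSubgroup.map F.1 (Vsub (σ j))) : ℝ))⁻¹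
        = ∏ j, ((Nat.card (Gs j) : ℝ))⁻¹ := by
    intro F hF
    rcases Finset.mem_filter.1 hF with ⟨-, htup⟩
    exact Finset.prod_congr rfl fun j _ => by rw [congrFun htup j]
  have hcard := card_fiber (n := n) htors σ Gs
  rw [Finset.sum_congr rfl hconst, Finset.sum_const, hcard, nsmul_eq_mul,
    dcoef, div_eq_mul_inv, ← Finset.prod_inv_distrib]

end Counting

section Main

variable [Fintype G]

lemma main_bounds (μ : Measure ℤ_[p]) (hμ : IsHaarProb μ)
    (hG : Nat.card G = p ^ m) (htors : ∀ g : G, p ^ m • g = 0) (hm : 0 < m)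
    (σn : Fin n → Finset (Fin n)) :
    En μ σn G = dcoef (p := p) σn (fun _ => (⊤ : AddSubgroup G))
        + (∑ᶠ (Gs : Fin n → AddSubgroup G) (_ : Gs ≠ fun _ => (⊤ : AddSubgroup G)),
            dcoef (p := p) σn Gs)
      ∧ 0 ≤ (∑ᶠ (Gs : Fin n → AddSubgroup G) (_ : Gs ≠ fun _ => (⊤ : AddSubgroup G)),
            dcoef (p := p) σn Gs)
      ∧ dcoef (p := p) σn (fun _ => (⊤ : AddSubgroup G))
          ≤ (Nat.card {F : (Fin n → ℤ_[p]) →+ G // Function.Surjective F} : ℝ)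
            / ((p : ℝ) ^ m) ^ n
      ∧ (Nat.card {F : (Fin n → ℤ_[p]) →+ G // Function.Surjective F} : ℝ)
            / ((p : ℝ) ^ m) ^ n
          ≤ dcoef (p := p) σn (fun _ => (⊤ : AddSubgroup G))
            + (p : ℝ)⁻¹ * (∑ᶠ (Gs : Fin n → AddSubgroup G)
                (_ : Gs ≠ fun _ => (⊤ : AddSubgroup G)), dcoef (p := p) σn Gs)
      ∧ 1 - (Nat.card (AddSubgroup G) : ℝ) * ((p : ℝ)⁻¹) ^ n
          ≤ (Nat.card {F : (Fin n → ℤ_[p]) →+ G // Function.Surjective F} : ℝ)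
            / ((p : ℝ) ^ m) ^ n
      ∧ (Nat.card {F : (Fin n → ℤ_[p]) →+ G // Function.Surjective F} : ℝ)
            / ((p : ℝ) ^ m) ^ n ≤ 1 := by
  classical
  haveI := finite_hom_padic (n := n) htors
  haveI : Fintype {F : (Fin n → ℤ_[p]) →+ G // Function.Surjective F} := Fintype.ofFinite _
  haveI : Fintype (Fin n → AddSubgroup G) := Fintype.ofFinite _
  have hp0 : (0 : ℝ) < p := by exact_mod_cast (Fact.out : p.Prime).pos
  have hgpos : (0 : ℝ) < ((p : ℝ) ^ m) ^ n := by positivity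
  have hfin : (∑ᶠ (Gs : Fin n → AddSubgroup G) (_ : Gs ≠ fun _ => (⊤ : AddSubgroup G)),
      dcoef (p := p) σn Gs)
      = ∑ Gs : Fin n → AddSubgroup G,
          (if Gs = (fun _ => (⊤ : AddSubgroup G)) then 0 else dcoef (p := p) σn Gs) := by
    rw [← finsum_eq_sum_of_fintype]
    refine finsum_congr fun Gs => ?_
    rw [finsum_eq_if, ite_not]
  rw [hfin]
  have hd0 : ∀ Gs : Fin n → AddSubgroup G, 0 ≤ dcoef (p := p) σn Gs := fun Gs => by
    rw [dcoef]
    positivity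
  have hR0 : 0 ≤ ∑ Gs : Fin n → AddSubgroup G,
      (if Gs = (fun _ => (⊤ : AddSubgroup G)) then 0 else dcoef (p := p) σn Gs) := by
    refine Finset.sum_nonneg fun Gs _ => ?_
    split_ifs with h
    · exact le_rfl
    · exact hd0 Gs
  have hcardpos : ∀ (Gs : Fin n → AddSubgroup G) (i : Fin n),
      (0 : ℝ) < (Nat.card (Gs i) : ℝ) := fun Gs i => by
    haveI : Nonempty (Gs i) := ⟨0, zero_mem _⟩
    exact_mod_cast Nat.card_pos
  have hprodpos : ∀ Gs : Fin n → AddSubgroup G,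
      (0 : ℝ) < ∏ i, (Nat.card (Gs i) : ℝ) := fun Gs =>
    Finset.prod_pos fun i _ => hcardpos Gs i
  have htop : ((Nat.card (⊤ : AddSubgroup G)) : ℝ) = (p : ℝ) ^ m := by
    rw [AddSubgroup.card_top, hG]
    push_cast
    ring
  have hsplit : ∀ f : (Fin n → AddSubgroup G) → ℝ,
      ∑ Gs, f Gs = f (fun _ => ⊤)
        + ∑ Gs, (if Gs = (fun _ => (⊤ : AddSubgroup G)) then 0 else f Gs) := by
    intro f
    rw [← Finset.add_sum_erase Finset.univ f (Finset.mem_univ (fun _ => ⊤))]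
    congr 1
    have h1 : ∑ Gs : Fin n → AddSubgroup G,
        (if Gs = (fun _ => (⊤ : AddSubgroup G)) then 0 else f Gs)
        = (if (fun _ => (⊤ : AddSubgroup G)) = (fun _ : Fin n => (⊤ : AddSubgroup G))
            then 0 else f (fun _ => ⊤))
          + ∑ Gs ∈ Finset.univ.erase (fun _ => (⊤ : AddSubgroup G)),
              (if Gs = (fun _ => (⊤ : AddSubgroup G)) then 0 else f Gs) :=
      (Finset.add_sum_erase Finset.univ _ (Finset.mem_univ _)).symm
    rw [h1, if_pos rfl, zero_add]
    refine (Finset.sum_congr rfl fun Gs hGs => ?_).symm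
    rw [if_neg (Finset.ne_of_mem_erase hGs)]
  have hDval : dcoef (p := p) σn (fun _ => (⊤ : AddSubgroup G))
      = (Nat.card {F : (Fin n → ℤ_[p]) →+ G // Function.Surjective F
          ∧ ∀ i, AddSubgroup.map F (Vsub (σn i)) = (⊤ : AddSubgroup G)} : ℝ)
        / ((p : ℝ) ^ m) ^ n := by
    rw [dcoef]
    congr 1
    rw [Finset.prod_congr rfl fun (i : Fin n) _ => htop, Finset.prod_const,
      Finset.card_univ, Fintype.card_fin]
  refine ⟨?_, hR0, ?_, ?_, ?_, ?_⟩
  -- (1) En = D + R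
  · rw [En_eq_sum_dcoef μ hμ htors σn, hsplit (fun Gs => dcoef (p := p) σn Gs)]
  -- (3) D ≤ S
  · rw [hDval]
    have hle : Nat.card {F : (Fin n → ℤ_[p]) →+ G // Function.Surjective F
          ∧ ∀ i, AddSubgroup.map F (Vsub (σn i)) = (⊤ : AddSubgroup G)}
        ≤ Nat.card {F : (Fin n → ℤ_[p]) →+ G // Function.Surjective F} :=
      Nat.card_le_card_of_injective (fun F => ⟨F.1, F.2.1⟩)
        (by
          intro a b h
          apply Subtype.ext
          have h2 := congrArg
            (fun s : {F : (Fin n → ℤ_[p]) →+ G // Function.Surjective F} => s.val) h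
          exact h2)
    have hle' : (Nat.card {F : (Fin n → ℤ_[p]) →+ G // Function.Surjective F
          ∧ ∀ i, AddSubgroup.map F (Vsub (σn i)) = (⊤ : AddSubgroup G)} : ℝ)
        ≤ (Nat.card {F : (Fin n → ℤ_[p]) →+ G // Function.Surjective F} : ℝ) := by
      exact_mod_cast hle
    gcongr
  -- (4) S ≤ D + p⁻¹ R
  · have hpart : (Nat.card {F : (Fin n → ℤ_[p]) →+ G // Function.Surjective F} : ℝ)
        = ∑ Gs : Fin n → AddSubgroup G,
            (Nat.card {F : (Fin n → ℤ_[p]) →+ G // Function.Surjective F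
              ∧ ∀ i, AddSubgroup.map F (Vsub (σn i)) = Gs i} : ℝ) := by
      have h2 : ∑ Gs : Fin n → AddSubgroup G,
          ((Finset.univ.filter
            (fun F : {F : (Fin n → ℤ_[p]) →+ G // Function.Surjective F} =>
              (fun j => AddSubgroup.map F.1 (Vsub (σn j))) = Gs)).card)
          = Fintype.card {F : (Fin n → ℤ_[p]) →+ G // Function.Surjective F} := by
        rw [Fintype.card, Finset.card_eq_sum_ones]
        rw [Finset.sum_congr rfl fun Gs _ => Finset.card_eq_sum_ones _]
        exact Finset.sum_fiberwise Finset.univ _ _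
      have h3 : ∀ Gs : Fin n → AddSubgroup G,
          ((Finset.univ.filter
            (fun F : {F : (Fin n → ℤ_[p]) →+ G // Function.Surjective F} =>
              (fun j => AddSubgroup.map F.1 (Vsub (σn j))) = Gs)).card)
          = Nat.card {F : (Fin n → ℤ_[p]) →+ G // Function.Surjective F
              ∧ ∀ i, AddSubgroup.map F (Vsub (σn i)) = Gs i} :=
        fun Gs => card_fiber (n := n) htors σn Gs
      rw [Nat.card_eq_fintype_card, ← h2,
        Finset.sum_congr rfl fun Gs _ => (h3 Gs)]
      push_cast
      rfl
    have hterm : ∀ Gs : Fin n → AddSubgroup G, Gs ≠ (fun _ => (⊤ : AddSubgroup G)) →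
        (Nat.card {F : (Fin n → ℤ_[p]) →+ G // Function.Surjective F
            ∧ ∀ i, AddSubgroup.map F (Vsub (σn i)) = Gs i} : ℝ) / ((p : ℝ) ^ m) ^ n
          ≤ (p : ℝ)⁻¹ * dcoef (p := p) σn Gs := by
      intro Gs hGs
      obtain ⟨i₀, hi₀⟩ := Function.ne_iff.1 hGs
      have hn : 0 < n := i₀.pos
      have hcardle : ∀ i : Fin n, (Nat.card (Gs i) : ℝ) ≤ (p : ℝ) ^ m := by
        intro i
        have hdvd : Nat.card (Gs i) ∣ p ^ m := by
          rw [← hG]; exact AddSubgroup.card_addSubgroup_dvd_card (Gs i)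
        have := Nat.le_of_dvd (Nat.pow_pos (n := m) (Fact.out : p.Prime).pos) hdvd
        exact_mod_cast this
      have hi₀le : (Nat.card (Gs i₀) : ℝ) ≤ (p : ℝ) ^ (m - 1) := by
        have := card_subgroup_le_of_ne_top hG (Gs i₀) hi₀
        exact_mod_cast this
      have hprodle : ∏ i, (Nat.card (Gs i) : ℝ)
          ≤ (p : ℝ) ^ (m - 1) * ((p : ℝ) ^ m) ^ (n - 1) := by
        rw [← Finset.mul_prod_erase Finset.univ _ (Finset.mem_univ i₀)]
        have hrest : ∏ i ∈ Finset.univ.erase i₀, (Nat.card (Gs i) : ℝ)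
            ≤ ((p : ℝ) ^ m) ^ (n - 1) := by
          calc ∏ i ∈ Finset.univ.erase i₀, (Nat.card (Gs i) : ℝ)
              ≤ ∏ _i ∈ Finset.univ.erase i₀, (p : ℝ) ^ m :=
                Finset.prod_le_prod (fun i _ => (hcardpos Gs i).le)
                  (fun i _ => hcardle i)
            _ = ((p : ℝ) ^ m) ^ (n - 1) := by
                rw [Finset.prod_const, Finset.card_erase_of_mem (Finset.mem_univ i₀),
                  Finset.card_univ, Fintype.card_fin]
        refine mul_le_mul hi₀le hrest (Finset.prod_nonneg fun i _ => (hcardpos Gs i).le)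
          (by positivity)
      have hple : (p : ℝ) * ∏ i, (Nat.card (Gs i) : ℝ) ≤ ((p : ℝ) ^ m) ^ n := by
        have h4 : (p : ℝ) * ((p : ℝ) ^ (m - 1) * ((p : ℝ) ^ m) ^ (n - 1))
            = ((p : ℝ) ^ m) ^ n := by
          have hm1 : m - 1 + 1 = m := Nat.succ_pred_eq_of_pos hm
          have hn1 : n - 1 + 1 = n := Nat.succ_pred_eq_of_pos hn
          rw [← mul_assoc, mul_comm (p : ℝ) _, ← pow_succ, hm1, ← pow_succ', hn1]
        rw [← h4]
        exact mul_le_mul_of_nonneg_left hprodle hp0.le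
      have hcards : (Nat.card {F : (Fin n → ℤ_[p]) →+ G // Function.Surjective F
            ∧ ∀ i, AddSubgroup.map F (Vsub (σn i)) = Gs i} : ℝ)
          = dcoef (p := p) σn Gs * ∏ i, (Nat.card (Gs i) : ℝ) := by
        rw [dcoef, div_mul_cancel₀ _ (hprodpos Gs).ne']
      rw [hcards, mul_div_assoc, mul_comm ((p : ℝ)⁻¹) _]
      refine mul_le_mul_of_nonneg_left ?_ (hd0 Gs)
      rw [div_le_iff₀ hgpos]
      have hinv : (p : ℝ)⁻¹ * ((p : ℝ) * ∏ i, (Nat.card (Gs i) : ℝ))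
          = ∏ i, (Nat.card (Gs i) : ℝ) := by
        field_simp
      calc ∏ i, (Nat.card (Gs i) : ℝ)
          = (p : ℝ)⁻¹ * ((p : ℝ) * ∏ i, (Nat.card (Gs i) : ℝ)) := hinv.symm
        _ ≤ (p : ℝ)⁻¹ * ((p : ℝ) ^ m) ^ n :=
            mul_le_mul_of_nonneg_left hple (inv_nonneg.2 hp0.le)
    -- assemble (4)
    have hS : (Nat.card {F : (Fin n → ℤ_[p]) →+ G // Function.Surjective F} : ℝ)
        / ((p : ℝ) ^ m) ^ n
        = ∑ Gs : Fin n → AddSubgroup G,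
            (Nat.card {F : (Fin n → ℤ_[p]) →+ G // Function.Surjective F
              ∧ ∀ i, AddSubgroup.map F (Vsub (σn i)) = Gs i} : ℝ) / ((p : ℝ) ^ m) ^ n := by
      rw [hpart, Finset.sum_div]
    rw [hS, hsplit (fun Gs =>
      (Nat.card {F : (Fin n → ℤ_[p]) →+ G // Function.Surjective F
        ∧ ∀ i, AddSubgroup.map F (Vsub (σn i)) = Gs i} : ℝ) / ((p : ℝ) ^ m) ^ n)]
    refine add_le_add ?_ ?_
    · exact le_of_eq (by rw [hDval])
    · have hsum2 : ∑ Gs : Fin n → AddSubgroup G,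
          (if Gs = (fun _ => (⊤ : AddSubgroup G)) then 0 else
            (Nat.card {F : (Fin n → ℤ_[p]) →+ G // Function.Surjective F
              ∧ ∀ i, AddSubgroup.map F (Vsub (σn i)) = Gs i} : ℝ) / ((p : ℝ) ^ m) ^ n)
          ≤ ∑ Gs : Fin n → AddSubgroup G,
            (if Gs = (fun _ => (⊤ : AddSubgroup G)) then 0 else
              (p : ℝ)⁻¹ * dcoef (p := p) σn Gs) := by
        refine Finset.sum_le_sum fun Gs _ => ?_
        split_ifs with h
        · exact le_rfl
        · exact hterm Gs h
      refine hsum2.trans (le_of_eq ?_)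
      rw [Finset.mul_sum]
      refine Finset.sum_congr rfl fun Gs _ => ?_
      split_ifs with h
      · rw [mul_zero]
      · rfl
  -- (5) lower bound for S
  · have hhomsplit : (Nat.card {F : (Fin n → ℤ_[p]) →+ G // Function.Surjective F} : ℝ)
        + (Nat.card {F : (Fin n → ℤ_[p]) →+ G // ¬ Function.Surjective F} : ℝ)
        = ((p : ℝ) ^ m) ^ n := by
      have h := card_add_card_compl (α := (Fin n → ℤ_[p]) →+ G)
        (fun F => Function.Surjective F)
      have hch : Nat.card ((Fin n → ℤ_[p]) →+ G) = (p ^ m) ^ n := by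
        rw [card_hom G htors, hG]
      rw [hch] at h
      exact_mod_cast h
    have hnon : (Nat.card {F : (Fin n → ℤ_[p]) →+ G // ¬ Function.Surjective F} : ℝ)
        ≤ (Nat.card (AddSubgroup G) : ℝ) * ((p : ℝ) ^ (m - 1)) ^ n := by
      exact_mod_cast card_nonsur_le hG htors
    have hr : ((p : ℝ) ^ (m - 1)) ^ n / ((p : ℝ) ^ m) ^ n = ((p : ℝ)⁻¹) ^ n := by
      rw [← div_pow]
      congr 1
      have hpm : (p : ℝ) ^ m = (p : ℝ) ^ (m - 1) * p := by
        have hm1 : m - 1 + 1 = m := Nat.succ_pred_eq_of_pos hm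
        rw [← pow_succ, hm1]
      rw [hpm, div_mul_eq_div_div, div_self (by positivity), one_div]
    have hSalt : (Nat.card {F : (Fin n → ℤ_[p]) →+ G // Function.Surjective F} : ℝ)
          / ((p : ℝ) ^ m) ^ n
        = 1 - (Nat.card {F : (Fin n → ℤ_[p]) →+ G // ¬ Function.Surjective F} : ℝ)
          / ((p : ℝ) ^ m) ^ n := by
      rw [eq_sub_iff_add_eq, ← add_div, hhomsplit, div_self hgpos.ne']
    rw [hSalt]
    have hnd : (Nat.card {F : (Fin n → ℤ_[p]) →+ G // ¬ Function.Surjective F} : ℝ)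
          / ((p : ℝ) ^ m) ^ n
        ≤ (Nat.card (AddSubgroup G) : ℝ) * ((p : ℝ)⁻¹) ^ n := by
      rw [← hr, ← mul_div_assoc]
      gcongr
    linarith
  -- (6) S ≤ 1
  · rw [div_le_one hgpos]
    have hhomsplit : (Nat.card {F : (Fin n → ℤ_[p]) →+ G // Function.Surjective F} : ℝ)
        + (Nat.card {F : (Fin n → ℤ_[p]) →+ G // ¬ Function.Surjective F} : ℝ)
        = ((p : ℝ) ^ m) ^ n := by
      have h := card_add_card_compl (α := (Fin n → ℤ_[p]) →+ G)
        (fun F => Function.Surjective F)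
      have hch : Nat.card ((Fin n → ℤ_[p]) →+ G) = (p ^ m) ^ n := by
        rw [card_hom G htors, hG]
      rw [hch] at h
      exact_mod_cast h
    have : (0 : ℝ) ≤ (Nat.card {F : (Fin n → ℤ_[p]) →+ G // ¬ Function.Surjective F} : ℝ) := by
      positivity
    linarith

end Main

end Prop31

/-- **Proposition 3.1**: `E_n(G) → 1` iff the sum of `d_{G_1,…,G_n}` over all tuples of
subgroups of `G` not all equal to `G` tends to `0`. -/
theorem statement1 {p : ℕ} [Fact p.Prime] (μ : Measure ℤ_[p]) (hμ : IsHaarProb μ)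
    (σ : (n : ℕ) → Fin n → Finset (Fin n))
    (G : Type) [AddCommGroup G] [Fintype G] (m : ℕ) (hG : Nat.card G = p ^ m) :
    Tendsto (fun n => En μ (σ n) G) atTop (nhds 1) ↔
      Tendsto (fun n =>
          ∑ᶠ (Gs : Fin n → AddSubgroup G) (_ : Gs ≠ fun _ => (⊤ : AddSubgroup G)),
            dcoef (p := p) (σ n) Gs)
        atTop (nhds 0) := by
  classical
  have htors : ∀ g : G, p ^ m • g = 0 := fun g => by
    rw [← hG, Nat.card_eq_fintype_card]
    exact card_nsmul_eq_zero
  rcases Nat.eq_zero_or_pos m with hm0 | hm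
  · -- trivial group case
    subst hm0
    have hG1 : Nat.card G = 1 := by simpa using hG
    haveI hss : Subsingleton G := (Nat.card_eq_one_iff_unique.1 hG1).1
    have hsub : ∀ H : AddSubgroup G, H = ⊤ := fun H => by
      ext x
      simp only [AddSubgroup.mem_top, iff_true]
      have hx : x = 0 := Subsingleton.elim x 0
      rw [hx]
      exact zero_mem H
    have hR : ∀ n : ℕ, (∑ᶠ (Gs : Fin n → AddSubgroup G)
        (_ : Gs ≠ fun _ => (⊤ : AddSubgroup G)), dcoef (p := p) (σ n) Gs) = 0 := by
      intro n
      have hz : ∀ Gs : Fin n → AddSubgroup G,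
          (∑ᶠ (_ : Gs ≠ fun _ => (⊤ : AddSubgroup G)), dcoef (p := p) (σ n) Gs) = 0 := by
        intro Gs
        have hGs : Gs = fun _ => ⊤ := funext fun i => hsub _
        rw [finsum_eq_if, if_neg (not_not_intro hGs)]
      rw [finsum_congr hz, finsum_zero]
    have hE : ∀ n : ℕ, En μ (σ n) G = 1 := by
      intro n
      haveI := Prop31.finite_hom_padic (n := n) htors
      haveI : Fintype {F : (Fin n → ℤ_[p]) →+ G // Function.Surjective F} :=
        Fintype.ofFinite _
      haveI : Fintype (Fin n → AddSubgroup G) := Fintype.ofFinite _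
      rw [Prop31.En_eq_sum_dcoef μ hμ htors (σ n)]
      have hd : ∀ Gs : Fin n → AddSubgroup G, dcoef (p := p) (σ n) Gs = 1 := by
        intro Gs
        rw [dcoef]
        have hnum : Nat.card {F : (Fin n → ℤ_[p]) →+ G // Function.Surjective F
            ∧ ∀ i, AddSubgroup.map F (Vsub (σ n i)) = Gs i} = 1 := by
          rw [Nat.card_eq_one_iff_unique]
          refine ⟨⟨fun a b => ?_⟩, ?_⟩
          · apply Subtype.ext
            apply AddMonoidHom.ext
            intro x
            exact Subsingleton.elim _ _
          · exact ⟨⟨0, fun y => ⟨0, Subsingleton.elim _ _⟩,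
              fun i => (hsub _).trans (hsub (Gs i)).symm⟩⟩
        have hden : ∀ i : Fin n, (Nat.card (Gs i) : ℝ) = 1 := fun i => by
          have h1 : Nat.card (Gs i) = 1 := by
            rw [hsub (Gs i), AddSubgroup.card_top, hG1]
          rw [h1, Nat.cast_one]
        rw [hnum, Finset.prod_congr rfl fun i _ => hden i, Finset.prod_const, one_pow]
        norm_num
      rw [Finset.sum_congr rfl fun Gs _ => hd Gs, Finset.sum_const, nsmul_eq_mul, mul_one]
      have hcard1 : Fintype.card (Fin n → AddSubgroup G) = 1 := by
        rw [← Nat.card_eq_fintype_card, Nat.card_eq_one_iff_unique]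
        exact ⟨⟨fun a b => funext fun i => (hsub (a i)).trans (hsub (b i)).symm⟩,
          ⟨fun _ => ⊤⟩⟩
      rw [Finset.card_univ, hcard1, Nat.cast_one]
    refine iff_of_true ?_ ?_
    · have h1 : (fun n => En μ (σ n) G) = fun _ => (1 : ℝ) := funext hE
      rw [h1]
      exact tendsto_const_nhds
    · have h2 : (fun n : ℕ =>
          ∑ᶠ (Gs : Fin n → AddSubgroup G) (_ : Gs ≠ fun _ => (⊤ : AddSubgroup G)),
            dcoef (p := p) (σ n) Gs) = fun _ => (0 : ℝ) := funext hR
      rw [h2]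
      exact tendsto_const_nhds
  · -- nontrivial case
    have key := fun n : ℕ => Prop31.main_bounds (n := n) μ hμ hG htors hm (σ n)
    set S : ℕ → ℝ := fun n =>
      (Nat.card {F : (Fin n → ℤ_[p]) →+ G // Function.Surjective F} : ℝ)
        / ((p : ℝ) ^ m) ^ n with hSdef
    set R : ℕ → ℝ := fun n =>
      ∑ᶠ (Gs : Fin n → AddSubgroup G) (_ : Gs ≠ fun _ => (⊤ : AddSubgroup G)),
        dcoef (p := p) (σ n) Gs with hRdef
    set D : ℕ → ℝ := fun n => dcoef (p := p) (σ n) (fun _ => (⊤ : AddSubgroup G)) with hDdef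
    have hEn : ∀ n, En μ (σ n) G = D n + R n := fun n => (key n).1
    have hR0 : ∀ n, 0 ≤ R n := fun n => (key n).2.1
    have hDS : ∀ n, D n ≤ S n := fun n => (key n).2.2.1
    have hSD : ∀ n, S n ≤ D n + (p : ℝ)⁻¹ * R n := fun n => (key n).2.2.2.1
    have hSlb : ∀ n, 1 - (Nat.card (AddSubgroup G) : ℝ) * ((p : ℝ)⁻¹) ^ n ≤ S n :=
      fun n => (key n).2.2.2.2.1
    have hSub : ∀ n, S n ≤ 1 := fun n => (key n).2.2.2.2.2
    have hp1 : (1 : ℝ) < p := by exact_mod_cast (Fact.out : p.Prime).one_lt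
    have hp0 : (0 : ℝ) < p := lt_trans one_pos hp1
    have hrinv0 : (0 : ℝ) ≤ (p : ℝ)⁻¹ := inv_nonneg.2 hp0.le
    have hrinv1 : (p : ℝ)⁻¹ < 1 := inv_lt_one_of_one_lt₀ hp1
    have hS1 : Tendsto S atTop (nhds 1) := by
      have hlow : Tendsto (fun n : ℕ =>
          1 - (Nat.card (AddSubgroup G) : ℝ) * ((p : ℝ)⁻¹) ^ n) atTop (nhds 1) := by
        have h1 := (tendsto_pow_atTop_nhds_zero_of_lt_one hrinv0 hrinv1).const_mul
          ((Nat.card (AddSubgroup G) : ℝ))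
        have h2 : Tendsto (fun _ : ℕ => (1 : ℝ)) atTop (nhds 1) := tendsto_const_nhds
        simpa using h2.sub h1
      exact tendsto_of_tendsto_of_tendsto_of_le_of_le hlow tendsto_const_nhds hSlb hSub
    constructor
    · intro hEtend
      have hc : (0 : ℝ) < 1 - (p : ℝ)⁻¹ := by linarith
      have hub : ∀ n, R n ≤ (En μ (σ n) G - S n) / (1 - (p : ℝ)⁻¹) := by
        intro n
        rw [le_div_iff₀ hc]
        have h1 := hSD n
        have h2 := hEn n
        nlinarith [hR0 n]
      refine squeeze_zero hR0 hub ?_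
      have h3 : Tendsto (fun n => En μ (σ n) G - S n) atTop (nhds 0) := by
        simpa using hEtend.sub hS1
      simpa using h3.div_const (1 - (p : ℝ)⁻¹)
    · intro hRtend
      have hlow : Tendsto (fun n => S n - R n) atTop (nhds 1) := by
        simpa using hS1.sub hRtend
      have hhigh : Tendsto (fun n => S n + R n) atTop (nhds 1) := by
        simpa using hS1.add hRtend
      refine tendsto_of_tendsto_of_tendsto_of_le_of_le hlow hhigh ?_ ?_
      · intro n
        show S n - R n ≤ En μ (σ n) G
        have h1 := hSD n
        have h2 := hEn n
        have h3 := hR0 n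
        have h4 : (p : ℝ)⁻¹ * R n ≤ R n := by nlinarith
        linarith
      · intro n
        show En μ (σ n) G ≤ S n + R n
        have h1 := hDS n
        have h2 := hEn n
        linarith
end

section
/- Fix a finite abelian p-group G. Let Σ_n = (σ_{n,1},…,σ_{n,n}) and Σ'_n = (σ'_{n,1},…,σ'_{n,n}) be tuples of subsets of [n] with σ_{n,i} ⊆ σ'_{n,i} for every n ≥ 1 and i ∈ [n]. Let X_n (resp. X'_n) be the Haar-random n×n matrix over Z_p supported on Σ_n (resp. Σ'_n), and let E_n(G) (resp. E'_n(G)) be the expected number of surjections from cok(X_n) (resp. cok(X'_n)) onto G. If lim_{n→∞} E_n(G) = 1, then lim_{n→∞} E'_n(G) = 1. -/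
open MeasureTheory Filter

set_option linter.unusedSectionVars false
set_option linter.unnecessarySimpa false
set_option linter.unreachableTactic false
set_option linter.unusedTactic false
set_option maxHeartbeats 1000000
open Function
open scoped ENNReal


namespace Prop32

variable {p : ℕ} [Fact p.Prime] {m : ℕ} {G : Type} [AddCommGroup G] [Fintype G] {n : ℕ}

instance : BorelSpace ℤ_[p] := ⟨rfl⟩

lemma neZeroQ (p m : ℕ) [Fact p.Prime] : NeZero (p ^ m) := ⟨pow_ne_zero m (Fact.out : p.Prime).ne_zero⟩

lemma mod_nsmul (hq : ∀ x : G, p ^ m • x = 0) (x : ℕ) (g : G) :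
    (x % p ^ m) • g = x • g := by
  conv_rhs => rw [← Nat.mod_add_div x (p ^ m)]
  rw [add_nsmul, ← smul_smul, hq, add_zero]

lemma val_add_smul (hq : ∀ x : G, p ^ m • x = 0) (a b : ZMod (p ^ m)) (g : G) :
    (a + b).val • g = a.val • g + b.val • g := by
  haveI : NeZero (p ^ m) := neZeroQ p m
  rw [ZMod.val_add, mod_nsmul hq, add_nsmul]

/-- The bare function `x ↦ ∑ i (x i mod p^m) • v i`. -/
noncomputable def phi (p : ℕ) [Fact p.Prime] (m : ℕ) {G : Type} [AddCommGroup G] {n : ℕ}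
    (v : Fin n → G) (x : Fin n → ℤ_[p]) : G :=
  ∑ i, (PadicInt.toZModPow m (x i)).val • v i

/-- The bare function `y ↦ ∑_{i ∈ s} (y i).val • v i`. -/
noncomputable def ell {p m : ℕ} {G : Type} [AddCommGroup G] {n : ℕ}
    (v : Fin n → G) (s : Finset (Fin n)) (y : Fin n → ZMod (p ^ m)) : G :=
  ∑ i ∈ s, (y i).val • v i

noncomputable def ellHom (hq : ∀ x : G, p ^ m • x = 0) (v : Fin n → G) (s : Finset (Fin n)) :
    (Fin n → ZMod (p ^ m)) →+ G where
  toFun := ell v s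
  map_zero' := by
    haveI : NeZero (p ^ m) := neZeroQ p m
    simp [ell, ZMod.val_zero]
  map_add' := fun y z => by
    simp only [ell, Pi.add_apply, val_add_smul hq, Finset.sum_add_distrib]

noncomputable def phiHom (hq : ∀ x : G, p ^ m • x = 0) (v : Fin n → G) :
    (Fin n → ℤ_[p]) →+ G where
  toFun := phi p m v
  map_zero' := by
    haveI : NeZero (p ^ m) := neZeroQ p m
    simp [phi, ZMod.val_zero]
  map_add' := fun y z => by
    simp only [phi, Pi.add_apply, map_add, val_add_smul hq, Finset.sum_add_distrib]

lemma phi_eq_ell (v : Fin n → G) (x : Fin n → ℤ_[p]) :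
    phi p m v x = ell v Finset.univ (fun i => PadicInt.toZModPow m (x i)) := rfl

/-- Any additive hom `ℤ_p →+ G` is determined by its value at 1. -/
lemma hom_single (hq : ∀ x : G, p ^ m • x = 0) (φ : ℤ_[p] →+ G) (c : ℤ_[p]) :
    φ c = (PadicInt.toZModPow m c).val • φ 1 := by
  haveI : NeZero (p ^ m) := neZeroQ p m
  set k := (PadicInt.toZModPow m c).val with hk
  have hmem : c - (k : ℤ_[p]) ∈ RingHom.ker (PadicInt.toZModPow m) := by
    rw [RingHom.mem_ker, map_sub, map_natCast, hk, ZMod.natCast_zmod_val, sub_self]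
  rw [PadicInt.ker_toZModPow, Ideal.mem_span_singleton] at hmem
  obtain ⟨d, hd⟩ := hmem
  have hc : c = (k : ℤ_[p]) + (p : ℤ_[p]) ^ m * d := by
    rw [← hd]; ring
  have h1 : φ ((k : ℤ_[p])) = k • φ 1 := by
    have : ((k : ℤ_[p])) = k • (1 : ℤ_[p]) := by rw [nsmul_eq_mul, mul_one]
    rw [this, AddMonoidHom.map_nsmul]
  have h2 : φ ((p : ℤ_[p]) ^ m * d) = 0 := by
    have : (p : ℤ_[p]) ^ m * d = (p ^ m : ℕ) • d := by
      rw [nsmul_eq_mul]; push_cast; ring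
    rw [this, AddMonoidHom.map_nsmul, hq]
  rw [hc, map_add, h1, h2, add_zero]

lemma hom_eq (hq : ∀ x : G, p ^ m • x = 0) (f : (Fin n → ℤ_[p]) →+ G) (x : Fin n → ℤ_[p]) :
    f x = phi p m (fun i => f (Pi.single i 1)) x := by
  conv_lhs => rw [← Finset.univ_sum_single x, map_sum]
  refine Finset.sum_congr rfl fun i _ => ?_
  exact hom_single hq (f.comp (AddMonoidHom.single (fun _ : Fin n => ℤ_[p]) i)) (x i)

lemma phi_single (hq1 : 1 < p ^ m) (v : Fin n → G) (i : Fin n) :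
    phi p m v (Pi.single i (1:ℤ_[p])) = v i := by
  haveI : NeZero (p ^ m) := neZeroQ p m
  haveI : Fact (1 < p ^ m) := ⟨hq1⟩
  rw [phi, Finset.sum_eq_single i]
  · simp [Pi.single_eq_same, ZMod.val_one]
  · intro b _ hb
    rw [Pi.single_eq_of_ne hb, map_zero, ZMod.val_zero, zero_smul]
  · intro hi; exact absurd (Finset.mem_univ i) hi

lemma hom_smul (hq : ∀ x : G, p ^ m • x = 0) (f : (Fin n → ℤ_[p]) →+ G)
    (c : ℤ_[p]) (w : Fin n → ℤ_[p]) :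
    f (c • w) = (PadicInt.toZModPow m c).val • f w := by
  let ψ : ℤ_[p] →+ G :=
    { toFun := fun a => f (a • w)
      map_zero' := by simp only [zero_smul, map_zero]
      map_add' := fun a b => by simp only [add_smul, map_add] }
  have := hom_single hq ψ c
  simpa [ψ, one_smul] using this


lemma ellHom_coe (hq : ∀ x : G, p ^ m • x = 0) (v : Fin n → G) (s : Finset (Fin n)) :
    ⇑(ellHom hq v s) = ell v s := rfl

lemma phiHom_coe (hq : ∀ x : G, p ^ m • x = 0) {n : ℕ} (v : Fin n → G) :
    ⇑(phiHom hq v) = phi p m v := rfl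

noncomputable def Mcard (p m : ℕ) {G : Type} [AddCommGroup G] {n : ℕ}
    (v : Fin n → G) (s : Finset (Fin n)) : ℕ :=
  Nat.card {y : Fin n → ZMod (p ^ m) // ell v s y = 0}

lemma Mcard_mul_range (hq : ∀ x : G, p ^ m • x = 0) (v : Fin n → G) (s : Finset (Fin n)) :
    Mcard p m v s * Nat.card (ellHom hq v s).range = (p ^ m) ^ n := by
  haveI : NeZero (p ^ m) := neZeroQ p m
  have h1 : Nat.card (Fin n → ZMod (p ^ m)) = (p ^ m) ^ n := by
    simp [Nat.card_pi, Nat.card_zmod]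
  have h2 : Nat.card ((Fin n → ZMod (p ^ m)) ⧸ (ellHom hq v s).ker)
      = Nat.card (ellHom hq v s).range :=
    Nat.card_congr (QuotientAddGroup.quotientKerEquivRange (ellHom hq v s)).toEquiv
  have h3 : Mcard p m v s = Nat.card (ellHom hq v s).ker := by
    apply Nat.card_congr
    apply Equiv.subtypeEquivRight
    intro y
    rw [AddMonoidHom.mem_ker, ellHom_coe]
  rw [h3, ← h1, AddSubgroup.card_eq_card_quotient_mul_card_addSubgroup (ellHom hq v s).ker, h2,
    mul_comm]

lemma range_mono (hq : ∀ x : G, p ^ m • x = 0) (v : Fin n → G) {s s' : Finset (Fin n)}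
    (hs : s ⊆ s') : (ellHom hq v s).range ≤ (ellHom hq v s').range := by
  haveI : NeZero (p ^ m) := neZeroQ p m
  classical
  rintro x ⟨y, rfl⟩
  refine ⟨fun i => if i ∈ s then y i else 0, ?_⟩
  rw [ellHom_coe, ellHom_coe]
  show ell v s' _ = ell v s y
  rw [ell, ell]
  rw [← Finset.sum_subset hs (fun x _ hx => by rw [if_neg hx, ZMod.val_zero, zero_smul])]
  exact Finset.sum_congr rfl fun x hx => by rw [if_pos hx]

lemma Mcard_mono (hq : ∀ x : G, p ^ m • x = 0) (v : Fin n → G) {s s' : Finset (Fin n)}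
    (hs : s ⊆ s') : Mcard p m v s' ≤ Mcard p m v s := by
  have e1 := Mcard_mul_range hq v s
  have e2 := Mcard_mul_range hq v s'
  have hr : Nat.card (ellHom hq v s).range ≤ Nat.card (ellHom hq v s').range :=
    Nat.card_le_card_of_injective (AddSubgroup.inclusion (range_mono hq v hs))
      (AddSubgroup.inclusion_injective _)
  have hpos : 0 < Nat.card (ellHom hq v s').range := Nat.card_pos
  refine Nat.le_of_mul_le_mul_right ?_ hpos
  rw [e2]
  calc (p ^ m) ^ n = Mcard p m v s * Nat.card (ellHom hq v s).range := e1.symm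
    _ ≤ Mcard p m v s * Nat.card (ellHom hq v s').range := Nat.mul_le_mul_left _ hr

lemma le_Mcard_mul (hq : ∀ x : G, p ^ m • x = 0) (v : Fin n → G) (s : Finset (Fin n)) :
    (p ^ m) ^ n ≤ Mcard p m v s * Nat.card G := by
  rw [← Mcard_mul_range hq v s]
  exact Nat.mul_le_mul_left _ (Nat.card_le_card_of_injective _ Subtype.val_injective)

lemma card_event (v : Fin n → G) (σ : Fin n → Finset (Fin n)) :
    Nat.card {Y : Fin n × Fin n → ZMod (p ^ m) // ∀ j, ell v (σ j) (fun i => Y (i, j)) = 0}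
      = ∏ j, Mcard p m v (σ j) := by
  have e : {Y : Fin n × Fin n → ZMod (p ^ m) // ∀ j, ell v (σ j) (fun i => Y (i, j)) = 0}
      ≃ ∀ j, {y : Fin n → ZMod (p ^ m) // ell v (σ j) y = 0} := by
    refine Equiv.trans ?_ Equiv.subtypePiEquivPi
    exact Equiv.subtypeEquiv
      ⟨fun Y j i => Y (i, j), fun Z c => Z c.2 c.1, fun Y => rfl, fun Z => rfl⟩
      (fun Y => Iff.rfl)
  rw [Nat.card_congr e, Nat.card_pi]
  rfl

-- columns generate the range
lemma col_mem (g : Fin n → Fin n → ℤ_[p]) (j : Fin n) :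
    (fun i => g i j) ∈ LinearMap.range (Matrix.of g).mulVecLin := by
  refine ⟨Pi.single j 1, ?_⟩
  ext i
  simp [Matrix.mulVecLin_apply, Matrix.mulVec_single]

lemma vanish_on_range (hq : ∀ x : G, p ^ m • x = 0) (g : Fin n → Fin n → ℤ_[p])
    (f : (Fin n → ℤ_[p]) →+ G) (hf : ∀ j, f (fun i => g i j) = 0) :
    ∀ x ∈ LinearMap.range (Matrix.of g).mulVecLin, f x = 0 := by
  rintro x ⟨c, rfl⟩
  have hdec : (Matrix.of g).mulVecLin c = ∑ j, c j • (fun i => g i j) := by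
    ext i
    simp only [Matrix.mulVecLin_apply, Matrix.mulVec, dotProduct, Matrix.of_apply,
      Finset.sum_apply, Pi.smul_apply, smul_eq_mul]
    exact Finset.sum_congr rfl fun j _ => mul_comm _ _
  rw [hdec, map_sum]
  refine Finset.sum_eq_zero fun j _ => ?_
  rw [hom_smul hq, hf j, smul_zero]

lemma nSur_eq (hq : ∀ x : G, p ^ m • x = 0) (hq1 : 1 < p ^ m) (g : Fin n → Fin n → ℤ_[p]) :
    nSur g G = Nat.card {v : Fin n → G //
      Surjective (phi p m v) ∧ ∀ j, ell v Finset.univ (fun i => PadicInt.toZModPow m (g i j)) = 0} := by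
  apply Nat.card_congr
  set N := LinearMap.range (Matrix.of g).mulVecLin with hN
  let mkh : (Fin n → ℤ_[p]) →+ cok g := N.mkQ.toAddMonoidHom
  have hmk_surj : Surjective mkh := Submodule.mkQ_surjective N
  -- lift construction
  have philift : ∀ (v : Fin n → G), (∀ j, phi p m v (fun i => g i j) = 0) →
      { F : cok g →+ G // ∀ x : Fin n → ℤ_[p], F (mkh x) = phi p m v x } := by
    intro v hv
    have hvan : ∀ x ∈ N, phiHom hq v x = 0 := by
      have := vanish_on_range hq g (phiHom hq v)
        (by intro j; rw [phiHom_coe]; exact hv j)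
      exact fun x hx => this x hx
    have hcongr : ∀ (a b : Fin n → ℤ_[p]), (Submodule.quotientRel N) a b →
        phi p m v a = phi p m v b := by
      intro a b hab
      have hab' : a - b ∈ N := (Submodule.quotientRel_def N).mp hab
      have h0 : phiHom hq v (a - b) = 0 := hvan _ hab'
      rw [map_sub, sub_eq_zero, phiHom_coe] at h0
      exact h0
    refine ⟨AddMonoidHom.mk' (fun x => Quotient.liftOn' x (phi p m v) hcongr) ?_,
      fun x => Quotient.liftOn'_mk'' (phi p m v) hcongr x⟩
    intro x y
    refine Quotient.inductionOn₂' x y fun a b => ?_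
    show Quotient.liftOn' ((Submodule.Quotient.mk a : cok g) + Submodule.Quotient.mk b)
        (phi p m v) hcongr =
      Quotient.liftOn' (Submodule.Quotient.mk a : cok g) (phi p m v) hcongr
        + Quotient.liftOn' (Submodule.Quotient.mk b : cok g) (phi p m v) hcongr
    rw [← Submodule.Quotient.mk_add N]
    simp only [← Submodule.Quotient.mk''_eq_mk, Quotient.liftOn'_mk'']
    rw [← phiHom_coe hq, map_add]
  -- the equivalence
  refine
    { toFun := fun F => ⟨fun i => F.1 (mkh (Pi.single i 1)), ?_, ?_⟩
      invFun := fun V => ⟨(philift V.1 ?_).1, ?_⟩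
      left_inv := ?_
      right_inv := ?_ }
  · -- surjectivity of phi
    have hcomp : ⇑(F.1.comp mkh) = phi p m (fun i => F.1 (mkh (Pi.single i 1))) := by
      funext x
      exact hom_eq hq (F.1.comp mkh) x
    have : Surjective (F.1.comp mkh) := F.2.comp hmk_surj
    rwa [hcomp] at this
  · -- vanishing on columns
    intro j
    have hcomp : ⇑(F.1.comp mkh) = phi p m (fun i => F.1 (mkh (Pi.single i 1))) := by
      funext x; exact hom_eq hq (F.1.comp mkh) x
    have : ell (fun i => F.1 (mkh (Pi.single i 1))) Finset.univ
        (fun i => PadicInt.toZModPow m (g i j)) = (F.1.comp mkh) (fun i => g i j) := by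
      rw [hcomp]; rfl
    rw [this]
    show F.1 (mkh fun i => g i j) = 0
    have hz : mkh (fun i => g i j) = 0 := (Submodule.Quotient.mk_eq_zero N).mpr (col_mem g j)
    rw [hz, map_zero]
  · -- condition for philift
    intro j
    show phi p m V.1 (fun i => g i j) = 0
    exact V.2.2 j
  · -- surjectivity of lift
    intro z
    obtain ⟨w, hw⟩ := V.2.1 z
    exact ⟨mkh w, ((philift V.1 _).2 w).trans hw⟩
  · -- left inverse
    intro F
    apply Subtype.ext
    apply AddMonoidHom.ext
    intro x
    refine Quotient.inductionOn' x fun a => ?_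
    exact ((philift _ _).2 a).trans (hom_eq hq (F.1.comp mkh) a).symm
  · -- right inverse
    intro V
    apply Subtype.ext
    funext i
    show ((philift V.1 _).1) (mkh (Pi.single i 1)) = V.1 i
    refine ((philift V.1 _).2 (Pi.single i 1)).trans ?_
    exact phi_single hq1 V.1 i

lemma measurableSet_fiber (m : ℕ) (y : ZMod (p ^ m)) :
    MeasurableSet (PadicInt.toZModPow m ⁻¹' {y} : Set ℤ_[p]) := by
  haveI : NeZero (p ^ m) := neZeroQ p m
  have hset : (PadicInt.toZModPow m ⁻¹' {y} : Set ℤ_[p])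
      = {x : ℤ_[p] | ‖x - ((y.val : ℤ_[p]))‖ ≤ (p : ℝ) ^ (-(m : ℤ))} := by
    ext x
    simp only [Set.mem_preimage, Set.mem_singleton_iff, Set.mem_setOf_eq]
    rw [PadicInt.norm_le_pow_iff_mem_span_pow, ← PadicInt.ker_toZModPow, RingHom.mem_ker,
      map_sub, map_natCast, ZMod.natCast_zmod_val, sub_eq_zero]
  rw [hset]
  exact IsClosed.measurableSet (isClosed_le ((continuous_id.sub continuous_const).norm)
    continuous_const)

lemma haar_fiber {μ : Measure ℤ_[p]} (hμ : IsHaarProb μ) (m : ℕ) (y : ZMod (p ^ m)) :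
    μ (PadicInt.toZModPow m ⁻¹' {y}) = ((p ^ m : ℕ) : ℝ≥0∞)⁻¹ := by
  haveI : NeZero (p ^ m) := neZeroQ p m
  haveI := hμ.1
  have key : ∀ z : ZMod (p ^ m),
      μ (PadicInt.toZModPow m ⁻¹' {z}) = μ (PadicInt.toZModPow m ⁻¹' {(0 : ZMod (p ^ m))}) := by
    intro z
    have him : (PadicInt.toZModPow m ⁻¹' {z} : Set ℤ_[p])
        = (fun x => ((z.val : ℤ_[p])) + x) '' (PadicInt.toZModPow m ⁻¹' {0}) := by
      ext w
      simp only [Set.mem_image, Set.mem_preimage, Set.mem_singleton_iff]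
      constructor
      · intro hw
        refine ⟨w - (z.val : ℤ_[p]), ?_, by ring⟩
        rw [map_sub, map_natCast, ZMod.natCast_zmod_val, hw, sub_self]
      · rintro ⟨u, hu, rfl⟩
        rw [map_add, map_natCast, ZMod.natCast_zmod_val, hu, add_zero]
    rw [him, hμ.2]
  have hdisj : Pairwise (Disjoint on fun z : ZMod (p ^ m) => PadicInt.toZModPow m ⁻¹' {z}) := by
    intro a b hab
    refine Set.disjoint_left.mpr fun x hxa hxb => hab ?_
    simp only [Set.mem_preimage, Set.mem_singleton_iff] at hxa hxb
    rw [← hxa, ← hxb]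
  have hcover : (⋃ z : ZMod (p ^ m), PadicInt.toZModPow m ⁻¹' {z}) = Set.univ := by
    ext x; simp
  have h1 : (1 : ℝ≥0∞) = ∑' z : ZMod (p ^ m), μ (PadicInt.toZModPow m ⁻¹' {z}) := by
    rw [← measure_univ (μ := μ), ← hcover,
      measure_iUnion hdisj (fun z => measurableSet_fiber m z)]
  rw [tsum_fintype] at h1
  simp_rw [key] at h1
  rw [Finset.sum_const, Finset.card_univ, ZMod.card] at h1
  have hq0 : ((p ^ m : ℕ) : ℝ≥0∞) ≠ 0 := by
    simp [pow_ne_zero, (Fact.out : p.Prime).ne_zero]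
  have hqt : ((p ^ m : ℕ) : ℝ≥0∞) ≠ ⊤ := ENNReal.natCast_ne_top _
  rw [key y]
  rw [nsmul_eq_mul] at h1
  have : μ (PadicInt.toZModPow m ⁻¹' {(0 : ZMod (p ^ m))})
      = ((p ^ m : ℕ) : ℝ≥0∞)⁻¹ * (((p ^ m : ℕ) : ℝ≥0∞) * μ (PadicInt.toZModPow m ⁻¹' {(0 : ZMod (p ^ m))})) := by
    rw [← mul_assoc, ENNReal.inv_mul_cancel hq0 hqt, one_mul]
  rw [this, ← h1, mul_one]

lemma box_measure {μ : Measure ℤ_[p]} (hμ : IsHaarProb μ) (m : ℕ) {n : ℕ}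
    (Y : Fin n × Fin n → ZMod (p ^ m)) :
    (Measure.pi fun _ : Fin n × Fin n => μ) (Set.univ.pi fun c => PadicInt.toZModPow m ⁻¹' {Y c})
      = (((p ^ m : ℕ) : ℝ≥0∞))⁻¹ ^ (n * n) := by
  haveI := hμ.1
  rw [Measure.pi_pi]
  simp_rw [haar_fiber hμ m]
  rw [Finset.prod_const, Finset.card_univ, Fintype.card_prod, Fintype.card_fin]

lemma event_measure {μ : Measure ℤ_[p]} (hμ : IsHaarProb μ) (m : ℕ) (v : Fin n → G)
    (σ : Fin n → Finset (Fin n)) :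
    (Measure.pi fun _ : Fin n × Fin n => μ)
      {ω : Fin n × Fin n → ℤ_[p] | ∀ j, ell v (σ j) (fun i => PadicInt.toZModPow m (ω (i, j))) = 0}
      = (Nat.card {Y : Fin n × Fin n → ZMod (p ^ m) // ∀ j, ell v (σ j) (fun i => Y (i, j)) = 0} : ℝ≥0∞)
        * (((p ^ m : ℕ) : ℝ≥0∞))⁻¹ ^ (n * n) := by
  classical
  set T : Finset (Fin n × Fin n → ZMod (p ^ m)) :=
    Finset.univ.filter (fun Y => ∀ j, ell v (σ j) (fun i => Y (i, j)) = 0) with hT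
  have hset : {ω : Fin n × Fin n → ℤ_[p] |
        ∀ j, ell v (σ j) (fun i => PadicInt.toZModPow m (ω (i, j))) = 0}
      = ⋃ Y ∈ T, Set.univ.pi fun c => PadicInt.toZModPow m ⁻¹' {Y c} := by
    ext ω
    simp only [Set.mem_setOf_eq, Set.mem_iUnion, hT, Finset.mem_filter, Finset.mem_univ,
      true_and, Set.mem_pi, Set.mem_univ, forall_true_left, Set.mem_preimage,
      Set.mem_singleton_iff]
    constructor
    · intro h
      exact ⟨fun c => PadicInt.toZModPow m (ω c), h, fun c => rfl⟩
    · rintro ⟨Y, hY, hωY⟩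
      intro j
      have : (fun i => PadicInt.toZModPow m (ω (i, j))) = fun i => Y (i, j) :=
        funext fun i => hωY (i, j)
      rw [this]
      exact hY j
  rw [hset, measure_biUnion_finset ?_ (fun Y _ => MeasurableSet.univ_pi
    (fun c => measurableSet_fiber m (Y c)))]
  · have : ∀ Y ∈ T, (Measure.pi fun _ : Fin n × Fin n => μ)
        (Set.univ.pi fun c => PadicInt.toZModPow m ⁻¹' {Y c})
        = (((p ^ m : ℕ) : ℝ≥0∞))⁻¹ ^ (n * n) := fun Y _ => box_measure hμ m Y
    rw [Finset.sum_congr rfl this, Finset.sum_const, nsmul_eq_mul]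
    congr 1
    rw [Nat.card_eq_fintype_card, Fintype.card_subtype]
  · intro Y hY Z hZ hYZ
    refine Set.disjoint_left.mpr fun ω hω1 hω2 => hYZ ?_
    refine funext fun c => ?_
    have h1 := hω1 c (Set.mem_univ c)
    have h2 := hω2 c (Set.mem_univ c)
    simp only [Set.mem_preimage, Set.mem_singleton_iff] at h1 h2
    rw [← h1, ← h2]

lemma measurable_F (σ : Fin n → Finset (Fin n)) :
    Measurable (fun ω : Fin n × Fin n → ℤ_[p] => fun i j => if i ∈ σ j then ω (i, j) else 0) := by
  refine measurable_pi_lambda _ fun i => measurable_pi_lambda _ fun j => ?_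
  by_cases h : i ∈ σ j
  · simpa [h] using measurable_pi_apply (i, j)
  · simpa [h] using measurable_const

/-- The matrix-space event set for a given `v`. -/
def Bset (p : ℕ) [Fact p.Prime] (m : ℕ) {G : Type} [AddCommGroup G] {n : ℕ}
    (v : Fin n → G) : Set (Fin n → Fin n → ℤ_[p]) :=
  {g | ∀ j, ell v Finset.univ (fun i => PadicInt.toZModPow m (g i j)) = 0}

lemma measurableSet_Bset (v : Fin n → G) : MeasurableSet (Bset p m v) := by
  have : Bset p m v = ⋂ j, {g : Fin n → Fin n → ℤ_[p] |
      ell v Finset.univ (fun i => PadicInt.toZModPow m (g i j)) = 0} := by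
    ext g; simp [Bset, Set.mem_iInter]
  rw [this]
  refine MeasurableSet.iInter fun j => ?_
  have hs : {g : Fin n → Fin n → ℤ_[p] | ell v Finset.univ (fun i => PadicInt.toZModPow m (g i j)) = 0}
      = ⋃ y : {y : Fin n → ZMod (p ^ m) // ell v Finset.univ y = 0},
          ⋂ i, {g : Fin n → Fin n → ℤ_[p] | PadicInt.toZModPow m (g i j) = y.1 i} := by
    ext g
    simp only [Set.mem_setOf_eq, Set.mem_iUnion, Set.mem_iInter]
    constructor
    · intro h
      exact ⟨⟨fun i => PadicInt.toZModPow m (g i j), h⟩, fun i => rfl⟩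
    · rintro ⟨y, hy⟩
      have : (fun i => PadicInt.toZModPow m (g i j)) = y.1 := funext hy
      rw [this]
      exact y.2
  rw [hs]
  refine MeasurableSet.iUnion fun y => MeasurableSet.iInter fun i => ?_
  have : {g : Fin n → Fin n → ℤ_[p] | PadicInt.toZModPow m (g i j) = y.1 i}
      = (fun g : Fin n → Fin n → ℤ_[p] => g i j) ⁻¹' (PadicInt.toZModPow m ⁻¹' {y.1 i}) := rfl
  rw [this]
  exact ((measurable_pi_apply j).comp (measurable_pi_apply i)) (measurableSet_fiber m (y.1 i))

def Cset (p : ℕ) [Fact p.Prime] (m : ℕ) {G : Type} [AddCommGroup G] {n : ℕ}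
    (v : Fin n → G) : Set (Fin n → Fin n → ℤ_[p]) :=
  {g | Surjective (phi p m v) ∧ g ∈ Bset p m v}

lemma measurableSet_Cset (v : Fin n → G) : MeasurableSet (Cset p m v) := by
  by_cases hA : Surjective (phi p m v)
  · have : Cset p m v = Bset p m v := by
      ext g; simp [Cset, hA]
    rw [this]; exact measurableSet_Bset v
  · have : Cset p m v = ∅ := by
      ext g; simp [Cset, hA]
    rw [this]; exact MeasurableSet.empty

lemma F_preimage_Bset (σ : Fin n → Finset (Fin n)) (v : Fin n → G) :
    (fun ω : Fin n × Fin n → ℤ_[p] => fun i j => if i ∈ σ j then ω (i, j) else 0) ⁻¹' Bset p m v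
      = {ω : Fin n × Fin n → ℤ_[p] |
          ∀ j, ell v (σ j) (fun i => PadicInt.toZModPow m (ω (i, j))) = 0} := by
  haveI : NeZero (p ^ m) := neZeroQ p m
  classical
  ext ω
  simp only [Set.mem_preimage, Bset, Set.mem_setOf_eq]
  refine forall_congr' fun j => ?_
  have : ell v Finset.univ
        (fun i => PadicInt.toZModPow m (if i ∈ σ j then ω (i, j) else 0))
      = ell v (σ j) (fun i => PadicInt.toZModPow m (ω (i, j))) := by
    rw [ell, ell]
    simp only [apply_ite (PadicInt.toZModPow m), map_zero, apply_ite ZMod.val, ZMod.val_zero,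
      ite_smul, zero_smul]
    rw [Finset.sum_ite_mem, Finset.univ_inter]
  rw [this]

open scoped Classical in
lemma En_formula {μ : Measure ℤ_[p]} (hμ : IsHaarProb μ) (hq : ∀ x : G, p ^ m • x = 0)
    (hq1 : 1 < p ^ m) (σ : Fin n → Finset (Fin n)) :
    En μ σ G = ∑ v : Fin n → G,
      (if Surjective (phi p m v)
        then (∏ j, (Mcard p m v (σ j) : ℝ)) * (((p ^ m : ℕ) : ℝ))⁻¹ ^ (n * n) else 0) := by
  classical
  haveI := hμ.1
  haveI : IsProbabilityMeasure (matrixLaw μ σ) :=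
    Measure.isProbabilityMeasure_map (measurable_F σ).aemeasurable
  have hin : ∀ g : Fin n → Fin n → ℤ_[p],
      (nSur g G : ℝ) = ∑ v : Fin n → G, Set.indicator (Cset p m v) (fun _ => (1 : ℝ)) g := by
    intro g
    rw [nSur_eq hq hq1 g, Nat.card_eq_fintype_card, Fintype.card_subtype, Finset.card_filter]
    push_cast
    refine Finset.sum_congr rfl fun v _ => ?_
    by_cases hC : Surjective (phi p m v) ∧
        ∀ j, ell v Finset.univ (fun i => PadicInt.toZModPow m (g i j)) = 0
    · have hmem : g ∈ Cset p m v := ⟨hC.1, hC.2⟩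
      rw [if_pos hC, Set.indicator_of_mem hmem]
    · have hmem : g ∉ Cset p m v := fun hmem => hC ⟨hmem.1, hmem.2⟩
      rw [if_neg hC, Set.indicator_of_notMem hmem]
  rw [En]
  calc ∫ g, (nSur g G : ℝ) ∂(matrixLaw μ σ)
      = ∫ g, (∑ v : Fin n → G, Set.indicator (Cset p m v) (fun _ => (1 : ℝ)) g) ∂(matrixLaw μ σ) := by
        exact integral_congr_ae (Filter.Eventually.of_forall hin)
    _ = ∑ v : Fin n → G, ∫ g, Set.indicator (Cset p m v) (fun _ => (1 : ℝ)) g ∂(matrixLaw μ σ) := by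
        refine integral_finset_sum _ fun v _ => ?_
        exact (integrable_const (1 : ℝ)).indicator (measurableSet_Cset v)
    _ = ∑ v : Fin n → G, ((matrixLaw μ σ) (Cset p m v)).toReal := by
        refine Finset.sum_congr rfl fun v _ => ?_
        rw [integral_indicator_const (1 : ℝ) (measurableSet_Cset v), smul_eq_mul, mul_one]
        rfl
    _ = _ := by
        refine Finset.sum_congr rfl fun v _ => ?_
        rw [matrixLaw, Measure.map_apply (measurable_F σ) (measurableSet_Cset v)]
        by_cases hA : Surjective (phi p m v)
        · have hceq : (Cset p m v : Set (Fin n → Fin n → ℤ_[p])) = Bset p m v := by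
            ext g; simp [Cset, hA]
          rw [if_pos hA, hceq, F_preimage_Bset σ v, event_measure hμ m v σ, card_event v σ]
          rw [ENNReal.toReal_mul, ENNReal.toReal_pow, ENNReal.toReal_inv,
            ENNReal.toReal_natCast, ENNReal.toReal_natCast]
          push_cast
          ring
        · have hceq : (Cset p m v : Set (Fin n → Fin n → ℤ_[p])) = ∅ := by
            ext g; simp [Cset, hA]
          rw [if_neg hA, hceq]
          simp

/-- Count of non-generating tuples. -/
lemma nongen_bound (hq : ∀ x : G, p ^ m • x = 0) (hq1 : 1 < p ^ m)
    (hG : Nat.card G = p ^ m) (n : ℕ) :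
    Nat.card {v : Fin n → G // ¬ Surjective (phi p m v)}
      ≤ Nat.card (AddSubgroup G) * (p ^ (m - 1)) ^ n := by
  classical
  haveI : Finite (AddSubgroup G) :=
    Finite.of_injective (fun H => (H : Set G)) SetLike.coe_injective
  haveI : Fintype (AddSubgroup G) := Fintype.ofFinite _
  have hp : p.Prime := Fact.out
  -- subgroup cards
  have hcard : ∀ H : AddSubgroup G, H ≠ ⊤ → Nat.card H ≤ p ^ (m - 1) := by
    intro H hH
    have hdvd : Nat.card H ∣ p ^ m := hG ▸ AddSubgroup.card_addSubgroup_dvd_card H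
    obtain ⟨k, hk, hcH⟩ := (Nat.dvd_prime_pow hp).mp hdvd
    have hklt : k ≠ m := by
      intro hkm
      exact hH (AddSubgroup.eq_top_of_card_eq H (by rw [hcH, hkm, hG]))
    have : k ≤ m - 1 := by omega
    rw [hcH]
    exact Nat.pow_le_pow_right hp.pos this
  -- inclusion into union
  rw [Nat.card_eq_fintype_card, Fintype.card_subtype]
  have hsub : Finset.univ.filter (fun v : Fin n → G => ¬ Surjective (phi p m v))
      ⊆ Finset.univ.biUnion (fun H : AddSubgroup G =>
          Finset.univ.filter (fun v : Fin n → G => H ≠ ⊤ ∧ ∀ i, v i ∈ H)) := by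
    intro v hv
    rw [Finset.mem_filter] at hv
    have hv' := hv.2
    rw [Finset.mem_biUnion]
    refine ⟨(phiHom hq v).range, Finset.mem_univ _, ?_⟩
    rw [Finset.mem_filter]
    refine ⟨Finset.mem_univ _, ?_, ?_⟩
    · intro htop
      apply hv'
      rw [← phiHom_coe hq v]
      exact AddMonoidHom.range_eq_top.mp htop
    · intro i
      exact ⟨Pi.single i 1, by rw [phiHom_coe hq v]; exact phi_single hq1 v i⟩
  calc (Finset.univ.filter (fun v : Fin n → G => ¬ Surjective (phi p m v))).card
      ≤ (Finset.univ.biUnion (fun H : AddSubgroup G =>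
          Finset.univ.filter (fun v : Fin n → G => H ≠ ⊤ ∧ ∀ i, v i ∈ H))).card :=
        Finset.card_le_card hsub
    _ ≤ ∑ H : AddSubgroup G,
          (Finset.univ.filter (fun v : Fin n → G => H ≠ ⊤ ∧ ∀ i, v i ∈ H)).card :=
        Finset.card_biUnion_le
    _ ≤ ∑ _H : AddSubgroup G, (p ^ (m - 1)) ^ n := by
        refine Finset.sum_le_sum fun H _ => ?_
        by_cases hH : H = ⊤
        · simp [hH]
        · have h1 : (Finset.univ.filter (fun v : Fin n → G => H ≠ ⊤ ∧ ∀ i, v i ∈ H)).card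
              ≤ (Finset.univ.filter (fun v : Fin n → G => ∀ i, v i ∈ H)).card := by
            apply Finset.card_le_card
            intro v hv
            rw [Finset.mem_filter] at hv ⊢
            exact ⟨hv.1, hv.2.2⟩
          refine h1.trans ?_
          have h2 : (Finset.univ.filter (fun v : Fin n → G => ∀ i, v i ∈ H)).card
              = Nat.card {v : Fin n → G // ∀ i, v i ∈ H} := by
            rw [Nat.card_eq_fintype_card, Fintype.card_subtype]
          rw [h2, Nat.card_congr (Equiv.subtypePiEquivPi
            (p := fun _ (x : G) => x ∈ H)), Nat.card_pi]
          calc ∏ _i : Fin n, Nat.card H ≤ ∏ _i : Fin n, p ^ (m - 1) :=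
                Finset.prod_le_prod' fun i _ => hcard H hH
            _ = (p ^ (m - 1)) ^ n := by
                rw [Finset.prod_const, Finset.card_univ, Fintype.card_fin]
    _ = Nat.card (AddSubgroup G) * (p ^ (m - 1)) ^ n := by
        rw [Finset.sum_const, Finset.card_univ, smul_eq_mul, Nat.card_eq_fintype_card]

lemma gen_lower (hq : ∀ x : G, p ^ m • x = 0) (hq1 : 1 < p ^ m)
    (hG : Nat.card G = p ^ m) (n : ℕ) :
    (p ^ m) ^ n ≤ Nat.card {v : Fin n → G // Surjective (phi p m v)}
      + Nat.card (AddSubgroup G) * (p ^ (m - 1)) ^ n := by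
  classical
  have h1 : Fintype.card {v : Fin n → G // ¬ Surjective (phi p m v)}
      = Fintype.card (Fin n → G) - Fintype.card {v : Fin n → G // Surjective (phi p m v)} :=
    Fintype.card_subtype_compl _
  have h2 : Fintype.card {v : Fin n → G // Surjective (phi p m v)}
      ≤ Fintype.card (Fin n → G) := Fintype.card_subtype_le _
  have h3 : Fintype.card (Fin n → G) = (p ^ m) ^ n := by
    rw [Fintype.card_pi, ← hG, Nat.card_eq_fintype_card]
    simp
  have h4 := nongen_bound hq hq1 hG n
  have h5 : Nat.card {v : Fin n → G // ¬ Surjective (phi p m v)}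
      = Fintype.card {v : Fin n → G // ¬ Surjective (phi p m v)} := Nat.card_eq_fintype_card
  have h6 : Nat.card {v : Fin n → G // Surjective (phi p m v)}
      = Fintype.card {v : Fin n → G // Surjective (phi p m v)} := Nat.card_eq_fintype_card
  omega

open scoped Classical in
lemma En_le {μ : Measure ℤ_[p]} (hμ : IsHaarProb μ) (hq : ∀ x : G, p ^ m • x = 0)
    (hq1 : 1 < p ^ m) (σ σ' : Fin n → Finset (Fin n)) (hsub : ∀ i, σ i ⊆ σ' i) :
    En μ σ' G ≤ En μ σ G := by
  rw [En_formula hμ hq hq1 σ, En_formula hμ hq hq1 σ']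
  refine Finset.sum_le_sum fun v _ => ?_
  by_cases hA : Surjective (phi p m v)
  · rw [if_pos hA, if_pos hA]
    refine mul_le_mul_of_nonneg_right ?_ (by positivity)
    refine Finset.prod_le_prod (fun j _ => by positivity) fun j _ => ?_
    exact_mod_cast Mcard_mono hq v (hsub j)
  · rw [if_neg hA, if_neg hA]

open scoped Classical in
lemma En_ge {μ : Measure ℤ_[p]} (hμ : IsHaarProb μ) (hq : ∀ x : G, p ^ m • x = 0)
    (hq1 : 1 < p ^ m) (hG : Nat.card G = p ^ m) (σ : Fin n → Finset (Fin n)) :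
    1 - (Nat.card (AddSubgroup G) : ℝ) * ((p : ℝ)⁻¹) ^ n ≤ En μ σ G := by
  have hp : p.Prime := Fact.out
  have hm : m ≠ 0 := by
    intro h; rw [h, pow_zero] at hq1; omega
  have hp0 : (0 : ℝ) < (p : ℝ) := by exact_mod_cast hp.pos
  set qR : ℝ := ((p ^ m : ℕ) : ℝ) with hqR
  have hqR0 : 0 < qR := by
    rw [hqR]; exact_mod_cast pow_pos hp.pos m
  have idB : (qR ^ n * qR⁻¹) ^ n * (qR⁻¹) ^ (n * n) = (qR⁻¹) ^ n := by
    rw [mul_pow, ← pow_mul, inv_pow, inv_pow]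
    rw [mul_comm (qR ^ (n * n)) ((qR ^ n)⁻¹), mul_assoc,
      mul_inv_cancel₀ (by positivity), mul_one]
  rw [En_formula hμ hq hq1 σ]
  have step1 : ∑ v : Fin n → G, (if Surjective (phi p m v) then (qR⁻¹) ^ n else 0)
      ≤ ∑ v : Fin n → G, (if Surjective (phi p m v)
          then (∏ j, (Mcard p m v (σ j) : ℝ)) * (qR⁻¹) ^ (n * n) else 0) := by
    refine Finset.sum_le_sum fun v _ => ?_
    by_cases hA : Surjective (phi p m v)
    · rw [if_pos hA, if_pos hA]
      have hM : ∀ j : Fin n, qR ^ n * qR⁻¹ ≤ (Mcard p m v (σ j) : ℝ) := by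
        intro j
        have h1 : ((p ^ m) ^ n : ℕ) ≤ (Mcard p m v (σ j) * Nat.card G : ℕ) := le_Mcard_mul hq v (σ j)
        have h2 : qR ^ n ≤ (Mcard p m v (σ j) : ℝ) * qR := by
          rw [hG] at h1
          have := (Nat.cast_le (α := ℝ)).mpr h1
          push_cast at this
          rw [hqR]; push_cast
          convert this using 2 <;> ring
        calc qR ^ n * qR⁻¹ ≤ ((Mcard p m v (σ j) : ℝ) * qR) * qR⁻¹ :=
              mul_le_mul_of_nonneg_right h2 (by positivity)
          _ = (Mcard p m v (σ j) : ℝ) := by field_simp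
      calc (qR⁻¹) ^ n = (qR ^ n * qR⁻¹) ^ n * (qR⁻¹) ^ (n * n) := idB.symm
        _ ≤ (∏ j, (Mcard p m v (σ j) : ℝ)) * (qR⁻¹) ^ (n * n) := by
            refine mul_le_mul_of_nonneg_right ?_ (by positivity)
            have hconst : (qR ^ n * qR⁻¹) ^ n = ∏ _j : Fin n, (qR ^ n * qR⁻¹) := by
              rw [Finset.prod_const, Finset.card_univ, Fintype.card_fin]
            rw [hconst]
            exact Finset.prod_le_prod (fun _ _ => by positivity) (fun j _ => hM j)
    · rw [if_neg hA, if_neg hA]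
  refine le_trans ?_ step1
  have hsum : ∑ v : Fin n → G, (if Surjective (phi p m v) then (qR⁻¹) ^ n else 0)
      = (Nat.card {v : Fin n → G // Surjective (phi p m v)} : ℝ) * (qR⁻¹) ^ n := by
    rw [← Finset.sum_filter, Finset.sum_const, nsmul_eq_mul]
    congr 2
    rw [Nat.card_eq_fintype_card, Fintype.card_subtype]
  rw [hsum]
  have hcount := gen_lower hq hq1 hG n
  have hcountR : qR ^ n ≤ (Nat.card {v : Fin n → G // Surjective (phi p m v)} : ℝ)
      + (Nat.card (AddSubgroup G) : ℝ) * ((p : ℝ) ^ (m - 1)) ^ n := by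
    have := (Nat.cast_le (α := ℝ)).mpr hcount
    push_cast at this
    rw [hqR]; push_cast
    convert this using 2 <;> ring
  have hqRp : qR = (p : ℝ) ^ (m - 1) * (p : ℝ) := by
    rw [hqR]; push_cast
    rw [← pow_succ]
    congr 1
    omega
  have idA : ((p : ℝ) ^ (m - 1)) ^ n * (qR⁻¹) ^ n = ((p : ℝ)⁻¹) ^ n := by
    rw [hqRp, mul_inv, mul_pow ((p:ℝ)^(m-1))⁻¹, ← mul_assoc, ← mul_pow,
      mul_inv_cancel₀ (by positivity), one_pow, one_mul, inv_pow]
  have idC : qR ^ n * (qR⁻¹) ^ n = 1 := by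
    rw [← mul_pow, mul_inv_cancel₀ hqR0.ne', one_pow]
  calc 1 - (Nat.card (AddSubgroup G) : ℝ) * ((p : ℝ)⁻¹) ^ n
      = qR ^ n * (qR⁻¹) ^ n
        - (Nat.card (AddSubgroup G) : ℝ) * (((p : ℝ) ^ (m - 1)) ^ n * (qR⁻¹) ^ n) := by
        rw [idC, idA]
    _ = (qR ^ n - (Nat.card (AddSubgroup G) : ℝ) * ((p : ℝ) ^ (m - 1)) ^ n) * (qR⁻¹) ^ n := by
        ring
    _ ≤ (Nat.card {v : Fin n → G // Surjective (phi p m v)} : ℝ) * (qR⁻¹) ^ n := by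
        refine mul_le_mul_of_nonneg_right ?_ (by positivity)
        linarith [hcountR]

lemma En_trivial {μ : Measure ℤ_[p]} (hμ : IsHaarProb μ) (hGone : Nat.card G = 1)
    (σ : Fin n → Finset (Fin n)) : En μ σ G = 1 := by
  haveI := hμ.1
  haveI : IsProbabilityMeasure (matrixLaw μ σ) :=
    Measure.isProbabilityMeasure_map (measurable_F σ).aemeasurable
  haveI hGs : Subsingleton G := (Nat.card_eq_one_iff_unique.mp hGone).1
  have h1 : ∀ g : Fin n → Fin n → ℤ_[p], (nSur g G : ℝ) = 1 := by
    intro g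
    have : Nat.card {f : cok g →+ G // Surjective f} = 1 := by
      rw [Nat.card_eq_one_iff_unique]
      constructor
      · constructor
        intro a b
        exact Subtype.ext (AddMonoidHom.ext fun x => Subsingleton.elim _ _)
      · exact ⟨⟨0, fun y => ⟨0, Subsingleton.elim _ _⟩⟩⟩
    rw [nSur, this, Nat.cast_one]
  calc En μ σ G = ∫ _g, (1 : ℝ) ∂(matrixLaw μ σ) := by
        rw [En]; exact integral_congr_ae (Filter.Eventually.of_forall h1)
    _ = 1 := by simp

end Prop32

/-- **Proposition 3.2**: if `σ_{n,i} ⊆ σ'_{n,i}` for all `n, i` and `E_n(G) → 1` for the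
Haar-random matrices supported on `Σ_n`, then `E'_n(G) → 1` for those supported on `Σ'_n`. -/
theorem statement2 {p : ℕ} [Fact p.Prime] (μ : Measure ℤ_[p]) (hμ : IsHaarProb μ)
    (σ σ' : (n : ℕ) → Fin n → Finset (Fin n))
    (hsub : ∀ n, ∀ i : Fin n, σ n i ⊆ σ' n i)
    (G : Type) [AddCommGroup G] [Fintype G] (m : ℕ) (hG : Nat.card G = p ^ m)
    (h : Tendsto (fun n => En μ (σ n) G) atTop (nhds 1)) :
    Tendsto (fun n => En μ (σ' n) G) atTop (nhds 1) := by
  have hp : p.Prime := Fact.out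
  by_cases hm : m = 0
  · have hGone : Nat.card G = 1 := by rw [hG, hm, pow_zero]
    have : ∀ n, En μ (σ' n) G = 1 := fun n => Prop32.En_trivial hμ hGone (σ' n)
    simp_rw [this]
    exact tendsto_const_nhds
  · have hq1 : 1 < p ^ m := Nat.one_lt_pow hm hp.one_lt
    have hq : ∀ x : G, p ^ m • x = 0 := by
      intro x
      rw [← hG]
      exact card_nsmul_eq_zero'
    have hlow : ∀ n, ∀ τ : Fin n → Finset (Fin n),
        1 - (Nat.card (AddSubgroup G) : ℝ) * ((p : ℝ)⁻¹) ^ n ≤ En μ τ G :=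
      fun n τ => Prop32.En_ge hμ hq hq1 hG τ
    have hup : ∀ n, En μ (σ' n) G ≤ En μ (σ n) G :=
      fun n => Prop32.En_le hμ hq hq1 (σ n) (σ' n) (hsub n)
    have htend : Tendsto (fun n : ℕ => 1 - (Nat.card (AddSubgroup G) : ℝ) * ((p : ℝ)⁻¹) ^ n)
        atTop (nhds 1) := by
      have h0 : Tendsto (fun n : ℕ => ((p : ℝ)⁻¹) ^ n) atTop (nhds 0) := by
        refine tendsto_pow_atTop_nhds_zero_of_lt_one (by positivity) ?_
        rw [inv_lt_one_iff₀]
        right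
        exact_mod_cast hp.one_lt
      have h1 := h0.const_mul (Nat.card (AddSubgroup G) : ℝ)
      rw [mul_zero] at h1
      have h2 := (tendsto_const_nhds (x := (1:ℝ)) (f := atTop)).sub h1
      rw [sub_zero] at h2
      exact h2
    exact tendsto_of_tendsto_of_tendsto_of_le_of_le htend h
      (fun n => hlow n (σ' n)) hup
end

section
/- Let n ≥ 4 and let m be an integer with 2 ≤ m ≤ n − 2. Let t_1, …, t_n ∈ [0,1] and set t := (t_1 t_2 ⋯ t_n)^{1/n}. Then f_{m,n}(t_1, …, t_n) ≥ f_{m,n}(t, t, …, t). -/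
/-- `f_{m,n}(x_1,…,x_n) = Σ_{S ⊆ [n], |S| ≥ m} (∏_{j ∈ S} x_j)(∏_{j ∉ S} (1 - x_j))`. -/
def fmn (m : ℕ) {n : ℕ} (x : Fin n → ℝ) : ℝ :=
  ∑ S ∈ Finset.univ.filter (fun S : Finset (Fin n) => m ≤ S.card),
    (∏ j ∈ S, x j) * ∏ j ∈ Sᶜ, (1 - x j)

section Aux

open Finset

variable {ι : Type*} [DecidableEq ι]

noncomputable def gaux (m : ℕ) (s : Finset ι) (x : ι → ℝ) : ℝ :=
  ∑ S ∈ s.powerset, if m ≤ S.card then (∏ j ∈ S, x j) * ∏ j ∈ s \ S, (1 - x j) else 0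

lemma gaux_congr {m : ℕ} {s : Finset ι} {x y : ι → ℝ} (h : ∀ j ∈ s, x j = y j) :
    gaux m s x = gaux m s y := by
  unfold gaux
  refine Finset.sum_congr rfl fun S hS => ?_
  rw [mem_powerset] at hS
  congr 1
  · congr 1
    · exact Finset.prod_congr rfl fun j hj => h j (hS hj)
    · exact Finset.prod_congr rfl fun j hj => by rw [h j (mem_sdiff.mp hj).1]

lemma gaux_nonneg {m : ℕ} {s : Finset ι} {x : ι → ℝ}
    (hx : ∀ j ∈ s, x j ∈ Set.Icc (0:ℝ) 1) : 0 ≤ gaux m s x := by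
  refine Finset.sum_nonneg fun S hS => ?_
  rw [mem_powerset] at hS
  split
  · refine mul_nonneg (Finset.prod_nonneg fun j hj => (hx j (hS hj)).1)
      (Finset.prod_nonneg fun j hj => ?_)
    have := (hx j (mem_sdiff.mp hj).1).2; linarith
  · exact le_refl 0

lemma gaux_anti {m m' : ℕ} (hmm : m ≤ m') {s : Finset ι} {x : ι → ℝ}
    (hx : ∀ j ∈ s, x j ∈ Set.Icc (0:ℝ) 1) : gaux m' s x ≤ gaux m s x := by
  refine Finset.sum_le_sum fun S hS => ?_
  rw [mem_powerset] at hS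
  have hterm : (0:ℝ) ≤ (∏ j ∈ S, x j) * ∏ j ∈ s \ S, (1 - x j) := by
    refine mul_nonneg (Finset.prod_nonneg fun j hj => (hx j (hS hj)).1)
      (Finset.prod_nonneg fun j hj => ?_)
    have := (hx j (mem_sdiff.mp hj).1).2; linarith
  by_cases h : m' ≤ S.card
  · rw [if_pos h, if_pos (hmm.trans h)]
  · rw [if_neg h]
    split <;> [exact hterm; exact le_refl 0]

lemma gaux_erase (m : ℕ) {s : Finset ι} {i : ι} (hi : i ∈ s) (x : ι → ℝ) :
    gaux m s x = x i * gaux (m-1) (s.erase i) x + (1 - x i) * gaux m (s.erase i) x := by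
  have hins : s = insert i (s.erase i) := (insert_erase hi).symm
  have hni : i ∉ s.erase i := notMem_erase i s
  unfold gaux
  conv_lhs => rw [hins]
  rw [Finset.sum_powerset_insert hni]
  have h1 : ∀ S ∈ (s.erase i).powerset,
      (if m ≤ S.card then (∏ j ∈ S, x j) * ∏ j ∈ insert i (s.erase i) \ S, (1 - x j) else 0)
      = (1 - x i) * (if m ≤ S.card then (∏ j ∈ S, x j) * ∏ j ∈ (s.erase i) \ S, (1 - x j) else 0) := by
    intro S hS
    rw [mem_powerset] at hS
    have hiS : i ∉ S := fun h => hni (hS h)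
    have : insert i (s.erase i) \ S = insert i ((s.erase i) \ S) := by
      rw [insert_sdiff_of_notMem _ hiS]
    rw [this, Finset.prod_insert (fun h => hni (mem_sdiff.mp h).1)]
    split <;> ring
  have h2 : ∀ S ∈ (s.erase i).powerset,
      (if m ≤ (insert i S).card then (∏ j ∈ insert i S, x j) * ∏ j ∈ insert i (s.erase i) \ insert i S, (1 - x j) else 0)
      = x i * (if m - 1 ≤ S.card then (∏ j ∈ S, x j) * ∏ j ∈ (s.erase i) \ S, (1 - x j) else 0) := by
    intro S hS
    rw [mem_powerset] at hS
    have hiS : i ∉ S := fun h => hni (hS h)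
    have hcard : (insert i S).card = S.card + 1 := card_insert_of_notMem hiS
    have hsd : insert i (s.erase i) \ insert i S = (s.erase i) \ S := by
      ext a
      simp only [mem_sdiff, mem_insert]
      constructor
      · rintro ⟨ha | ha, hb⟩
        · exact absurd (Or.inl ha) hb
        · exact ⟨ha, fun h => hb (Or.inr h)⟩
      · rintro ⟨ha, hb⟩
        exact ⟨Or.inr ha, by rintro (rfl | h); exacts [hni ha, hb h]⟩
    rw [hsd, Finset.prod_insert hiS, hcard]
    have hc : m ≤ S.card + 1 ↔ m - 1 ≤ S.card := by omega
    by_cases h : m - 1 ≤ S.card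
    · rw [if_pos (hc.mpr h), if_pos h]; ring
    · rw [if_neg (fun hh => h (hc.mp hh)), if_neg h]; ring
  rw [Finset.sum_congr rfl h1, Finset.sum_congr rfl h2, ← Finset.mul_sum, ← Finset.mul_sum]
  ring

lemma gaux_zero (s : Finset ι) (x : ι → ℝ) : gaux 0 s x = 1 := by
  unfold gaux
  simp only [Nat.zero_le, if_true]
  rw [← Finset.prod_add]
  simp

lemma gaux_of_zero {m : ℕ} (hm : 1 ≤ m) (s : Finset ι) :
    gaux m s (fun _ => (0:ℝ)) = 0 := by
  unfold gaux
  refine Finset.sum_eq_zero fun S hS => ?_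
  by_cases h : m ≤ S.card
  · rw [if_pos h]
    have hne : S.Nonempty := by
      rw [← Finset.card_pos]; omega
    obtain ⟨a, ha⟩ := hne
    rw [Finset.prod_eq_zero ha rfl, zero_mul]
  · rw [if_neg h]

lemma gaux_main (s : Finset ι) : ∀ (m : ℕ) (t : ℝ), t ∈ Set.Icc (0:ℝ) 1 →
    ∀ (x : ι → ℝ), (∀ j ∈ s, x j ∈ Set.Icc (0:ℝ) 1) → (∏ j ∈ s, x j) = t ^ s.card →
    gaux m s (fun _ => t) ≤ gaux m s x := by
  induction s using Finset.strongInduction with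
  | _ s IH =>
  intro m t ht x hx hprod
  by_cases hall : ∀ j ∈ s, x j = t
  · exact le_of_eq (gaux_congr fun j hj => (hall j hj).symm)
  push_neg at hall
  obtain ⟨w, hws, hwt⟩ := hall
  have hcard2 : 2 ≤ s.card := by
    rcases Nat.lt_or_ge s.card 2 with h | h
    · interval_cases h' : s.card
      · exact absurd (Finset.card_eq_zero.mp h' ▸ hws) (notMem_empty w)
      · obtain ⟨a, rfl⟩ := Finset.card_eq_one.mp h'
        rw [Finset.mem_singleton] at hws; subst hws
        simp only [Finset.prod_singleton, Finset.card_singleton, pow_one] at hprod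
        exact absurd hprod hwt
    · exact h
  rcases eq_or_lt_of_le ht.1 with ht0 | ht0
  · -- t = 0
    rcases Nat.eq_zero_or_pos m with rfl | hm
    · rw [gaux_zero, gaux_zero]
    · rw [← ht0, gaux_of_zero hm]
      exact gaux_nonneg hx
  -- t > 0
  obtain ⟨i, his, hmax⟩ := Finset.exists_max_image s x (⟨w, hws⟩)
  have hserase : (s.erase i).Nonempty := by
    rw [← Finset.card_pos, Finset.card_erase_of_mem his]; omega
  obtain ⟨j, hje, hmin⟩ := Finset.exists_min_image (s.erase i) x hserase
  have hjs : j ∈ s := Finset.mem_of_mem_erase hje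
  have hij : j ≠ i := Finset.ne_of_mem_erase hje
  -- basic bounds
  have hxi0 : 0 ≤ x i := (hx i his).1
  have hxi1 : x i ≤ 1 := (hx i his).2
  have hxj0 : 0 ≤ x j := (hx j hjs).1
  have hxj1 : x j ≤ 1 := (hx j hjs).2
  -- x i ≥ t
  have hti : t ≤ x i := by
    have h1 : (∏ l ∈ s, x l) ≤ ∏ l ∈ s, x i :=
      Finset.prod_le_prod (fun l hl => (hx l hl).1) (fun l hl => hmax l hl)
    rw [Finset.prod_const, hprod] at h1
    exact (pow_le_pow_iff_left₀ ht.1 hxi0 (by omega)).mp h1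
  have hxi_pos : 0 < x i := lt_of_lt_of_le ht0 hti
  -- x j ≤ t
  have hprod_erase : x i * ∏ l ∈ s.erase i, x l = t ^ s.card :=
    (Finset.mul_prod_erase s x his).symm ▸ hprod
  have hjt : x j ≤ t := by
    have h1 : ∏ _l ∈ s.erase i, x j ≤ ∏ l ∈ s.erase i, x l :=
      Finset.prod_le_prod (fun l _ => hxj0) (fun l hl => hmin l hl)
    rw [Finset.prod_const] at h1
    have h2 : ∏ l ∈ s.erase i, x l ≤ t ^ (s.erase i).card := by
      rw [Finset.card_erase_of_mem his]
      have hxi_ne : x i ≠ 0 := ne_of_gt hxi_pos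
      have : ∏ l ∈ s.erase i, x l = t ^ s.card / x i := by
        field_simp [← hprod_erase]
        linear_combination hprod_erase
      rw [this]
      calc t ^ s.card / x i ≤ t ^ s.card / t := by
            apply div_le_div_of_nonneg_left (by positivity) ht0 hti
        _ = t ^ (s.card - 1) := by
            rw [div_eq_iff (ne_of_gt ht0), ← pow_succ]
            congr 1; omega
    have h3 := h1.trans h2
    exact (pow_le_pow_iff_left₀ hxj0 ht.1 (by rw [Finset.card_erase_of_mem his]; omega)).mp h3
  -- now the replacement step
  set u : ℝ := x i * x j / t with hu
  set x' : ι → ℝ := Function.update (Function.update x j u) i t with hx'def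
  have hx'i : x' i = t := by rw [hx'def]; simp
  have hx'j : x' j = u := by
    rw [hx'def, Function.update_of_ne hij, Function.update_self]
  have hx'other : ∀ l, l ≠ i → l ≠ j → x' l = x l := by
    intro l hl1 hl2
    rw [hx'def, Function.update_of_ne hl1, Function.update_of_ne hl2]
  have hu0 : 0 ≤ u := by positivity
  have hu1 : u ≤ 1 := by
    rw [hu, div_le_one ht0]
    calc x i * x j ≤ 1 * t := mul_le_mul hxi1 hjt hxj0 zero_le_one
      _ = t := one_mul t
  have htu : t * u = x i * x j := by
    rw [hu]; field_simp
  have hsig : t + u ≤ x i + x j := by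
    rw [← sub_nonneg]
    have hkey : x i + x j - (t + u) = (x i - t) * (t - x j) / t := by
      rw [hu]; field_simp; ring
    rw [hkey]
    exact div_nonneg (mul_nonneg (by linarith) (by linarith)) (le_of_lt ht0)
  set s'' : Finset ι := (s.erase i).erase j with hs''
  have hs''sub : s'' ⊆ s := (Finset.erase_subset _ _).trans (Finset.erase_subset _ _)
  have hx'' : ∀ l ∈ s'', x' l = x l := by
    intro l hl
    exact hx'other l (Finset.ne_of_mem_erase (Finset.mem_of_mem_erase hl))
      (Finset.ne_of_mem_erase hl)
  set A : ℝ := gaux (m-1-1) s'' x with hA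
  set B : ℝ := gaux (m-1) s'' x with hB
  set C : ℝ := gaux m s'' x with hC
  have hxs'' : ∀ l ∈ s'', x l ∈ Set.Icc (0:ℝ) 1 := fun l hl => hx l (hs''sub hl)
  have hBC : C ≤ B := gaux_anti (Nat.sub_le m 1) hxs''
  have hCpos : 0 ≤ C := gaux_nonneg hxs''
  -- decompositions
  have hdx : gaux m s x = x i * (x j * A + (1 - x j) * B) + (1 - x i) * (x j * B + (1 - x j) * C) := by
    rw [gaux_erase m his x, gaux_erase (m-1) hje x, gaux_erase m hje x]
  have hdx' : gaux m s x' = t * (u * A + (1 - u) * B) + (1 - t) * (u * B + (1 - u) * C) := by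
    rw [gaux_erase m his x', gaux_erase (m-1) hje x', gaux_erase m hje x', hx'i, hx'j,
      gaux_congr hx'', gaux_congr hx'', gaux_congr hx'']
  have hkey : gaux m s x' ≤ gaux m s x := by
    rw [hdx, hdx', ← sub_nonneg]
    have hid : x i * (x j * A + (1 - x j) * B) + (1 - x i) * (x j * B + (1 - x j) * C)
        - (t * (u * A + (1 - u) * B) + (1 - t) * (u * B + (1 - u) * C))
        = (B - C) * ((x i + x j) - (t + u)) := by
      linear_combination (2*B - A - C) * htu
    rw [hid]
    exact mul_nonneg (by linarith) (by linarith)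
  -- induction step on s.erase i
  have hss : s.erase i ⊂ s := Finset.erase_ssubset his
  have hx'bd : ∀ l ∈ s.erase i, x' l ∈ Set.Icc (0:ℝ) 1 := by
    intro l hl
    rcases eq_or_ne l j with rfl | hlj
    · rw [hx'j]; exact ⟨hu0, hu1⟩
    · rw [hx'other l (Finset.ne_of_mem_erase hl) hlj]
      exact hx l (Finset.mem_of_mem_erase hl)
  have hprod' : ∏ l ∈ s.erase i, x' l = t ^ (s.erase i).card := by
    have hP : ∏ l ∈ s'', x' l = ∏ l ∈ s'', x l := Finset.prod_congr rfl fun l hl => hx'' l hl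
    have e1 : x' j * ∏ l ∈ s'', x' l = ∏ l ∈ s.erase i, x' l := Finset.mul_prod_erase _ x' hje
    have e2 : x j * ∏ l ∈ s'', x l = ∏ l ∈ s.erase i, x l := Finset.mul_prod_erase _ x hje
    rw [Finset.card_erase_of_mem his]
    apply mul_left_cancel₀ (ne_of_gt ht0)
    have hc1 : t * t ^ (s.card - 1) = t ^ s.card := by
      rw [← pow_succ']
      congr 1; omega
    rw [hc1, ← e1, hx'j, ← hprod_erase, ← e2, hP, ← mul_assoc, htu, mul_assoc]
  have hIH1 := IH (s.erase i) hss (m-1) t ht x' hx'bd hprod'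
  have hIH2 := IH (s.erase i) hss m t ht x' hx'bd hprod'
  have hconst : gaux m s (fun _ => t) =
      t * gaux (m-1) (s.erase i) (fun _ => t) + (1 - t) * gaux m (s.erase i) (fun _ => t) :=
    gaux_erase m his _
  have hdx'2 : gaux m s x' = t * gaux (m-1) (s.erase i) x' + (1 - t) * gaux m (s.erase i) x' := by
    rw [gaux_erase m his x', hx'i]
  calc gaux m s (fun _ => t)
      ≤ t * gaux (m-1) (s.erase i) x' + (1 - t) * gaux m (s.erase i) x' := by
        rw [hconst]
        exact add_le_add (mul_le_mul_of_nonneg_left hIH1 ht.1)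
          (mul_le_mul_of_nonneg_left hIH2 (by linarith [ht.2]))
    _ = gaux m s x' := hdx'2.symm
    _ ≤ gaux m s x := hkey

lemma fmn_eq_gaux (m : ℕ) {n : ℕ} (x : Fin n → ℝ) : fmn m x = gaux m Finset.univ x := by
  unfold fmn gaux
  rw [Finset.sum_filter, Finset.powerset_univ]
  refine Finset.sum_congr rfl fun S _ => ?_
  simp [Finset.compl_eq_univ_sdiff]

end Aux

/-- **Lemma 4.2**: for `2 ≤ m ≤ n - 2` and `t_1, …, t_n ∈ [0,1]`, writing
`t = (t_1 ⋯ t_n)^{1/n}` for the geometric mean, `f_{m,n}(t_1,…,t_n) ≥ f_{m,n}(t,…,t)`. -/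
theorem statement6 (n : ℕ) (hn : 4 ≤ n) (m : ℕ) (hm : 2 ≤ m) (hmn : m ≤ n - 2)
    (t : Fin n → ℝ) (ht : ∀ j, t j ∈ Set.Icc (0 : ℝ) 1) :
    fmn m (fun _ : Fin n => (∏ j, t j) ^ ((n : ℝ)⁻¹)) ≤ fmn m t := by
  rw [fmn_eq_gaux, fmn_eq_gaux]
  set P : ℝ := ∏ j, t j with hP
  have hP0 : 0 ≤ P := Finset.prod_nonneg fun j _ => (ht j).1
  have hP1 : P ≤ 1 := Finset.prod_le_one (fun j _ => (ht j).1) (fun j _ => (ht j).2)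
  set c : ℝ := P ^ ((n : ℝ)⁻¹) with hc
  have hc0 : 0 ≤ c := Real.rpow_nonneg hP0 _
  have hc1 : c ≤ 1 := Real.rpow_le_one hP0 hP1 (by positivity)
  have hpow : P = c ^ n := by
    rw [hc, ← Real.rpow_natCast (P ^ ((n:ℝ)⁻¹)) n, ← Real.rpow_mul hP0]
    rw [inv_mul_cancel₀ (by positivity : (n:ℝ) ≠ 0), Real.rpow_one]
  have hcard : (Finset.univ : Finset (Fin n)).card = n := by simp
  exact gaux_main Finset.univ m c ⟨hc0, hc1⟩ t (fun j _ => ht j) (by rw [hcard, ← hpow])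
end

section
/- Let G be a bipartite graph with bipartition {A, B} and let S ∈ F_A(G), i.e., ∅ ≠ S ⊊ A, N_G(S) ≠ B, and N_G(w) ⊄ N_G(S) for all w ∈ A \ S. Then N_G(B \ N_G(S)) = A \ S. -/
theorem statement14_general {A B : Type*} (r : A → B → Prop) (S : Set A)
    (h4 : ∀ w ∉ S, ¬ {b | r w b} ⊆ {b | ∃ a ∈ S, r a b}) :
    {a | ∃ b ∈ {b | ∃ a ∈ S, r a b}ᶜ, r a b} = Sᶜ := by
  ext a
  refine ⟨fun ⟨b, hb, hab⟩ haS => hb ⟨a, haS, hab⟩, fun haS => ?_⟩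
  obtain ⟨b, hab, hb⟩ := Set.not_subset.mp (h4 a haS)
  exact ⟨b, hb, hab⟩

/-- **Lemma 5.8**: a bipartite graph with bipartition `{A, B}` is given by its adjacency
relation `r : A → B → Prop`.  If `S ∈ F_A(G)`, i.e. `∅ ≠ S ⊊ A`, `N_G(S) ≠ B`, and
`N_G(w) ⊄ N_G(S)` for all `w ∈ A \ S`, then `N_G(B \ N_G(S)) = A \ S`. -/
theorem statement14 {A B : Type*} (r : A → B → Prop) (S : Set A)
    (h1 : S.Nonempty) (h2 : S ≠ Set.univ)
    (h3 : {b | ∃ a ∈ S, r a b} ≠ Set.univ)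
    (h4 : ∀ w ∉ S, ¬ {b | r w b} ⊆ {b | ∃ a ∈ S, r a b}) :
    {a | ∃ b ∈ {b | ∃ a ∈ S, r a b}ᶜ, r a b} = Sᶜ :=
  statement14_general r S h4
end
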